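/- arXiv:1912.09305 — 2 statements merged into one kernel-verified Lean document; each statement's English description precedes it below -/
import Mathlib

section
/- For f an orientation-preserving C¹⁺ᵇᵛ diffeomorphism of [0,1] with f(x) > x for all x ∈ (0,1), and any p ∈ (0,1): dist_∞(f) = lim_{N→∞} var(log Df^{2N}; [f^{-N}(p), f^{-N+1}(p)]). -/
open Filter Set ENNReal


lemma evar_neg (F : ℝ → ℝ) (s : Set ℝ) :
    eVariationOn (fun x => -(F x)) s = eVariationOn F s := by
  dsimp only [eVariationOn]
  congr 1 with p : 1
  congr 1 with i : 1
  rw [edist_neg_neg]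

lemma evar_add_le (F G : ℝ → ℝ) (s : Set ℝ) :
    eVariationOn (fun x => F x + G x) s ≤ eVariationOn F s + eVariationOn G s := by
  refine iSup_le ?_
  rintro ⟨n, u, hu, us⟩
  calc ∑ i ∈ Finset.range n, edist (F (u (i+1)) + G (u (i+1))) (F (u i) + G (u i))
      ≤ ∑ i ∈ Finset.range n, (edist (F (u (i+1))) (F (u i)) + edist (G (u (i+1))) (G (u i))) :=
        Finset.sum_le_sum fun i _ => edist_add_add_le _ _ _ _
    _ = (∑ i ∈ Finset.range n, edist (F (u (i+1))) (F (u i)))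
        + ∑ i ∈ Finset.range n, edist (G (u (i+1))) (G (u i)) := Finset.sum_add_distrib
    _ ≤ eVariationOn F s + eVariationOn G s :=
        add_le_add (eVariationOn.sum_le (f := F) hu us) (eVariationOn.sum_le (f := G) hu us)

lemma evar_sum_le {ι : Type*} (t : Finset ι) (F : ι → ℝ → ℝ) (s : Set ℝ) :
    eVariationOn (fun x => ∑ i ∈ t, F i x) s ≤ ∑ i ∈ t, eVariationOn (F i) s := by
  classical
  induction t using Finset.induction_on with
  | empty =>
      simp only [Finset.sum_empty]
      have : eVariationOn (fun _ : ℝ => (0:ℝ)) s = 0 := by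
        apply eVariationOn.constant_on
        rintro x ⟨x', -, rfl⟩ y ⟨y', -, rfl⟩
        rfl
      simp [this]
  | insert a t' hx ih =>
      simp only [Finset.sum_insert hx]
      exact (evar_add_le _ _ s).trans (add_le_add le_rfl ih)

lemma evar_chain (F : ℝ → ℝ) (q : ℕ → ℝ) (hq : ∀ k, q (k + 1) ≤ q k) :
    ∀ A B, A ≤ B →
      ∑ k ∈ Finset.Ico A B, eVariationOn F (Icc (q (k+1)) (q k))
        = eVariationOn F (Icc (q B) (q A)) := by
  have hanti : Antitone q := antitone_nat_of_succ_le hq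
  intro A B hAB
  induction B with
  | zero =>
      interval_cases A
      simp [eVariationOn.subsingleton F (Set.subsingleton_Icc_of_ge le_rfl)]
  | succ B ih =>
      rcases Nat.lt_or_ge A (B+1) with h | h
      · have hAB' : A ≤ B := Nat.lt_succ_iff.mp h
        rw [Finset.sum_Ico_succ_top hAB', ih hAB', add_comm]
        have := eVariationOn.Icc_add_Icc (s := (univ : Set ℝ)) F (hq B) (hanti hAB') (mem_univ _)
        simpa using this
      · have : A = B + 1 := le_antisymm hAB h
        subst this
        simp [eVariationOn.subsingleton F (Set.subsingleton_Icc_of_ge le_rfl)]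

lemma icc_inter (a b c : ℝ) (h : c ≤ b) : Icc a b ∩ Icc a c = Icc a c := by
  rw [Icc_inter_Icc]
  simp [h]

lemma icc_inter' (a b c : ℝ) (h : a ≤ c) : Icc a b ∩ Icc c b = Icc c b := by
  rw [Icc_inter_Icc]
  simp [h]

/-- If `φ` is right-continuous at `a` and BV on `[a,b]`, the variation on `[a,t]` is small
for some `t` close to `a`. -/
lemma tail_small {φ : ℝ → ℝ} {a b : ℝ} (hab : a < b)
    (hbv : eVariationOn φ (Icc a b) ≠ ⊤)
    (hcont : Tendsto φ (nhdsWithin a (Ioi a)) (nhds (φ a)))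
    {ε : ℝ≥0∞} (hε : 0 < ε) :
    ∃ t, a < t ∧ t ≤ b ∧ eVariationOn φ (Icc a t) ≤ ε := by
  classical
  set V := eVariationOn φ (Icc a b) with hV
  by_cases hVε : V ≤ ε
  · exact ⟨b, hab, le_rfl, hVε⟩
  push_neg at hVε
  have hεtop : ε ≠ ⊤ := fun h => (h ▸ hVε).not_ge le_top
  set η := ε / 2 with hη
  have hη0 : η ≠ 0 := by
    simp [hη, ENNReal.div_eq_zero_iff, hε.ne']
  have hηtop : η ≠ ⊤ := by
    rw [hη]
    exact (ENNReal.div_lt_top hεtop (by norm_num)).ne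
  have hVpos : V ≠ 0 := by
    intro h
    exact (h ▸ hVε).not_ge zero_le
  have hlt : V - η < V := ENNReal.sub_lt_self hbv hVpos hη0
  rw [hV, eVariationOn, lt_iSup_iff] at hlt
  obtain ⟨⟨n, u, hu, us⟩, hsum⟩ := hlt
  -- the finite set of partition values above `a`
  set P : Finset ℝ := (Finset.image u (Finset.range (n+1))).filter (fun x => a < x) with hP
  set c : ℝ := if h : P.Nonempty then min b (P.min' h) else b with hc
  have hca : a < c := by
    rw [hc]
    split
    · rename_i h
      refine lt_min hab ?_
      exact (Finset.mem_filter.mp (P.min'_mem h)).2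
    · exact hab
  set δ : ℝ≥0∞ := η / (2 * n + 2) with hδ
  have hδ0 : 0 < δ := by
    rw [hδ]
    apply ENNReal.div_pos hη0
    exact (ENNReal.add_lt_top.2 ⟨by
      simp [ENNReal.mul_lt_top, ENNReal.natCast_lt_top], ENNReal.ofNat_lt_top⟩).ne
  -- choose t
  have hev1 : ∀ᶠ x in nhdsWithin a (Ioi a), edist (φ x) (φ a) < δ := by
    have : Tendsto (fun x => edist (φ x) (φ a)) (nhdsWithin a (Ioi a)) (nhds 0) := by
      have := hcont.edist (tendsto_const_nhds (x := φ a) (f := nhdsWithin a (Ioi a)))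
      simpa using this
    exact this.eventually_lt_const hδ0
  have hev2 : ∀ᶠ x in nhdsWithin a (Ioi a), x ∈ Ioo a c :=
    Ioo_mem_nhdsGT_of_mem ⟨le_rfl, hca⟩
  obtain ⟨t, ht1, ht2⟩ := (hev1.and hev2).exists
  have htb : t ≤ b := by
    have : c ≤ b := by
      rw [hc]; split
      · exact min_le_left _ _
      · exact le_rfl
    exact le_of_lt (lt_of_lt_of_le ht2.2 this)
  have hta : a < t := ht2.1
  refine ⟨t, hta, htb, ?_⟩
  -- t is below every element of P
  have htP : ∀ x ∈ P, t ≤ x := by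
    intro x hx
    have hPne : P.Nonempty := ⟨x, hx⟩
    have : c ≤ x := by
      rw [hc, dif_pos hPne]
      exact le_trans (min_le_right _ _) (P.min'_le x hx)
    exact le_of_lt (lt_of_lt_of_le ht2.2 this)
  -- modified partition
  set v : ℕ → ℝ := fun i => max (u (min i n)) t with hv
  have hvmono : Monotone v := by
    intro i j hij
    exact max_le_max (hu (min_le_min hij le_rfl)) le_rfl
  have hvs : ∀ i, v i ∈ Icc t b := by
    intro i
    constructor
    · exact le_max_right _ _
    · exact max_le (us (min i n)).2 htb
  -- comparison of values
  have hcomp : ∀ i ≤ n, edist (φ (v i)) (φ (u i)) ≤ δ := by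
    intro i hi
    rw [hv]
    simp only [min_eq_left hi]
    rcases eq_or_lt_of_le (us i).1 with h | h
    · rw [← h, max_eq_right hta.le]
      exact ht1.le
    · have hmem : u i ∈ P := by
        rw [hP, Finset.mem_filter]
        exact ⟨Finset.mem_image_of_mem u (Finset.mem_range.2 (Nat.lt_succ_of_le hi)), h⟩
      rw [max_eq_left (htP _ hmem)]
      simp
  -- sum comparison
  have hsum2 : (∑ i ∈ Finset.range n, edist (φ (u (i+1))) (φ (u i)))
      ≤ (∑ i ∈ Finset.range n, edist (φ (v (i+1))) (φ (v i))) + (2 * n) * δ := by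
    calc ∑ i ∈ Finset.range n, edist (φ (u (i+1))) (φ (u i))
        ≤ ∑ i ∈ Finset.range n,
            (edist (φ (v (i+1))) (φ (v i)) + (δ + δ)) := by
          apply Finset.sum_le_sum
          intro i hi
          rw [Finset.mem_range] at hi
          calc edist (φ (u (i+1))) (φ (u i))
              ≤ edist (φ (u (i+1))) (φ (v (i+1))) + edist (φ (v (i+1))) (φ (v i))
                + edist (φ (v i)) (φ (u i)) := edist_triangle4 _ _ _ _
            _ ≤ δ + edist (φ (v (i+1))) (φ (v i)) + δ := by
                gcongr
                · rw [edist_comm]; exact hcomp (i+1) hi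
                · exact hcomp i (le_of_lt hi)
            _ = edist (φ (v (i+1))) (φ (v i)) + (δ + δ) := by ring
      _ = (∑ i ∈ Finset.range n, edist (φ (v (i+1))) (φ (v i))) + n * (δ + δ) := by
          rw [Finset.sum_add_distrib, Finset.sum_const, Finset.card_range, nsmul_eq_mul]
      _ = (∑ i ∈ Finset.range n, edist (φ (v (i+1))) (φ (v i))) + (2 * n) * δ := by
          congr 1
          ring
  have hvle : (∑ i ∈ Finset.range n, edist (φ (v (i+1))) (φ (v i)))
      ≤ eVariationOn φ (Icc t b) := eVariationOn.sum_le (f := φ) hvmono hvs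
  have hδsmall : (2 * (n:ℝ≥0∞)) * δ ≤ η := by
    rw [hδ]
    calc (2 * (n:ℝ≥0∞)) * (η / (2 * n + 2)) ≤ (2 * n + 2) * (η / (2 * n + 2)) :=
          mul_le_mul_left le_self_add _
      _ = η := by
          rw [mul_comm, ENNReal.div_mul_cancel (by intro h; rw [add_eq_zero] at h; exact (two_ne_zero h.2 : False)) (by
            exact (ENNReal.add_lt_top.2 ⟨by
              simp [ENNReal.mul_lt_top, ENNReal.natCast_lt_top], ENNReal.ofNat_lt_top⟩).ne)]
  -- conclude: V ≤ eVar (Icc t b) + ε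
  have hVle : V ≤ eVariationOn φ (Icc t b) + ε := by
    have h1 : V - η ≤ eVariationOn φ (Icc t b) + η :=
      le_trans hsum.le (hsum2.trans (by
        exact add_le_add hvle hδsmall))
    rw [tsub_le_iff_right] at h1
    calc V ≤ eVariationOn φ (Icc t b) + η + η := h1
      _ = eVariationOn φ (Icc t b) + ε := by
          rw [add_assoc, hη, ENNReal.add_halves]
  -- split the variation
  have hsplit : eVariationOn φ (Icc a t) + eVariationOn φ (Icc t b) = V := by
    have := eVariationOn.Icc_add_Icc (s := Icc a b) φ hta.le htb ⟨hta.le, htb⟩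
    rwa [icc_inter a b t htb, icc_inter' a b t hta.le, icc_inter a b b le_rfl] at this
  have hfin : eVariationOn φ (Icc t b) ≠ ⊤ := by
    intro h
    rw [← hsplit, h] at hbv
    simp at hbv
  have := hsplit.le.trans hVle
  rw [add_comm (eVariationOn φ (Icc a t))] at this
  exact (ENNReal.add_le_add_iff_left hfin).mp this

section Dyn

variable {f g : ℝ → ℝ}

lemma fmono (hfd : Differentiable ℝ f) (hposf : ∀ x ∈ Icc (0:ℝ) 1, 0 < deriv f x) :
    StrictMonoOn f (Icc (0:ℝ) 1) :=
  strictMonoOn_of_deriv_pos (convex_Icc 0 1) hfd.continuous.continuousOn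
    (fun x hx => hposf x (interior_subset hx))

lemma gmono (hfd : Differentiable ℝ f) (hposf : ∀ x ∈ Icc (0:ℝ) 1, 0 < deriv f x)
    (hmapsg : MapsTo g (Icc (0:ℝ) 1) (Icc (0:ℝ) 1))
    (hfg : ∀ x ∈ Icc (0:ℝ) 1, f (g x) = x) :
    MonotoneOn g (Icc (0:ℝ) 1) := by
  intro x hx y hy hxy
  by_contra hlt
  push_neg at hlt
  have := fmono hfd hposf (hmapsg hy) (hmapsg hx) hlt
  rw [hfg x hx, hfg y hy] at this
  exact absurd hxy (not_le_of_gt this)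

lemma iterMono (hfd : Differentiable ℝ f) (hposf : ∀ x ∈ Icc (0:ℝ) 1, 0 < deriv f x)
    (hmapsf : MapsTo f (Icc (0:ℝ) 1) (Icc (0:ℝ) 1)) (n : ℕ) :
    MonotoneOn (f^[n]) (Icc (0:ℝ) 1) := by
  induction n with
  | zero => simpa using monotoneOn_id
  | succ n ih =>
      intro x hx y hy hxy
      rw [Function.iterate_succ_apply, Function.iterate_succ_apply]
      exact ih (hmapsf hx) (hmapsf hy) ((fmono hfd hposf).monotoneOn hx hy hxy)

lemma giterMono (hfd : Differentiable ℝ f) (hposf : ∀ x ∈ Icc (0:ℝ) 1, 0 < deriv f x)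
    (hmapsg : MapsTo g (Icc (0:ℝ) 1) (Icc (0:ℝ) 1))
    (hfg : ∀ x ∈ Icc (0:ℝ) 1, f (g x) = x) (n : ℕ) :
    MonotoneOn (g^[n]) (Icc (0:ℝ) 1) := by
  induction n with
  | zero => simpa using monotoneOn_id
  | succ n ih =>
      intro x hx y hy hxy
      rw [Function.iterate_succ_apply, Function.iterate_succ_apply]
      exact ih (hmapsg hx) (hmapsg hy) (gmono hfd hposf hmapsg hfg hx hy hxy)

lemma gfIter (hmapsf : MapsTo f (Icc (0:ℝ) 1) (Icc (0:ℝ) 1))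
    (hgf : ∀ x ∈ Icc (0:ℝ) 1, g (f x) = x) (n : ℕ) :
    ∀ x ∈ Icc (0:ℝ) 1, g^[n] (f^[n] x) = x := by
  induction n with
  | zero => simp
  | succ n ih =>
      intro x hx
      rw [Function.iterate_succ_apply' (f := f), Function.iterate_succ_apply (f := g),
        hgf _ (hmapsf.iterate n hx)]
      exact ih x hx

lemma fgIter (hmapsg : MapsTo g (Icc (0:ℝ) 1) (Icc (0:ℝ) 1))
    (hfg : ∀ x ∈ Icc (0:ℝ) 1, f (g x) = x) (n : ℕ) :
    ∀ x ∈ Icc (0:ℝ) 1, f^[n] (g^[n] x) = x := by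
  induction n with
  | zero => simp
  | succ n ih =>
      intro x hx
      rw [Function.iterate_succ_apply' (f := g), Function.iterate_succ_apply (f := f),
        hfg _ (hmapsg.iterate n hx)]
      exact ih x hx

lemma imageIter (hfd : Differentiable ℝ f) (hposf : ∀ x ∈ Icc (0:ℝ) 1, 0 < deriv f x)
    (hmapsf : MapsTo f (Icc (0:ℝ) 1) (Icc (0:ℝ) 1))
    (hmapsg : MapsTo g (Icc (0:ℝ) 1) (Icc (0:ℝ) 1))
    (hgf : ∀ x ∈ Icc (0:ℝ) 1, g (f x) = x)
    (hfg : ∀ x ∈ Icc (0:ℝ) 1, f (g x) = x)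
    (n : ℕ) {a b : ℝ} (ha : a ∈ Icc (0:ℝ) 1) (hb : b ∈ Icc (0:ℝ) 1) (hab : a ≤ b) :
    f^[n] '' Icc a b = Icc (f^[n] a) (f^[n] b) := by
  apply le_antisymm
  · rintro _ ⟨x, hx, rfl⟩
    have hx1 : x ∈ Icc (0:ℝ) 1 := ⟨le_trans ha.1 hx.1, le_trans hx.2 hb.2⟩
    exact ⟨iterMono hfd hposf hmapsf n ha hx1 hx.1, iterMono hfd hposf hmapsf n hx1 hb hx.2⟩
  · intro y hy
    have hfa : f^[n] a ∈ Icc (0:ℝ) 1 := hmapsf.iterate n ha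
    have hfb : f^[n] b ∈ Icc (0:ℝ) 1 := hmapsf.iterate n hb
    have hy1 : y ∈ Icc (0:ℝ) 1 := ⟨le_trans hfa.1 hy.1, le_trans hy.2 hfb.2⟩
    refine ⟨g^[n] y, ⟨?_, ?_⟩, fgIter hmapsg hfg n y hy1⟩
    · have := giterMono hfd hposf hmapsg hfg n hfa hy1 hy.1
      rwa [gfIter hmapsf hgf n a ha] at this
    · have := giterMono hfd hposf hmapsg hfg n hy1 hfb hy.2
      rwa [gfIter hmapsf hgf n b hb] at this

lemma derivIter (hfd : Differentiable ℝ f) (n : ℕ) (x : ℝ) :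
    deriv (f^[n]) x = ∏ i ∈ Finset.range n, deriv f (f^[i] x) := by
  induction n with
  | zero => simp
  | succ n ih =>
      rw [Function.iterate_succ' f n]
      rw [deriv_comp x (hfd _) (hfd.iterate n x), ih, Finset.prod_range_succ, mul_comm]

lemma logSumIter (hfd : Differentiable ℝ f) (hposf : ∀ x ∈ Icc (0:ℝ) 1, 0 < deriv f x)
    (hmapsf : MapsTo f (Icc (0:ℝ) 1) (Icc (0:ℝ) 1)) (n : ℕ) :
    EqOn (fun x => Real.log (deriv (f^[n]) x))
      (fun x => ∑ i ∈ Finset.range n, Real.log (deriv f (f^[i] x))) (Icc (0:ℝ) 1) := by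
  intro x hx
  simp only
  rw [derivIter hfd n x]
  exact Real.log_prod (fun i _ => (hposf _ (hmapsf.iterate i hx)).ne')

end Dyn

section Cont

variable {f : ℝ → ℝ}

lemma derivLim0 (hfd : Differentiable ℝ f)
    (hposf : ∀ x ∈ Icc (0:ℝ) 1, 0 < deriv f x)
    (hbv : BoundedVariationOn (fun x => Real.log (deriv f x)) (Icc (0:ℝ) 1)) :
    Tendsto (fun x => Real.log (deriv f x)) (nhdsWithin 0 (Ioi 0))
      (nhds (Real.log (deriv f 0))) := by
  set φ : ℝ → ℝ := fun x => Real.log (deriv f x) with hφ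
  obtain ⟨P, Q, hP, hQ, hPQ⟩ :=
    hbv.locallyBoundedVariationOn.exists_monotoneOn_sub_monotoneOn
  have hne : (Ioo (0:ℝ) 1).Nonempty := ⟨1/2, by norm_num⟩
  have hPm : MonotoneOn P (Ioo (0:ℝ) 1) := hP.mono Ioo_subset_Icc_self
  have hQm : MonotoneOn Q (Ioo (0:ℝ) 1) := hQ.mono Ioo_subset_Icc_self
  have hPb : BddBelow (P '' Ioo (0:ℝ) 1) := by
    refine ⟨P 0, ?_⟩
    rintro _ ⟨x, hx, rfl⟩
    exact hP (left_mem_Icc.2 zero_le_one) (Ioo_subset_Icc_self hx) hx.1.le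
  have hQb : BddBelow (Q '' Ioo (0:ℝ) 1) := by
    refine ⟨Q 0, ?_⟩
    rintro _ ⟨x, hx, rfl⟩
    exact hQ (left_mem_Icc.2 zero_le_one) (Ioo_subset_Icc_self hx) hx.1.le
  have hPlim := hPm.tendsto_nhdsWithin_Ioo_right hne hPb
  have hQlim := hQm.tendsto_nhdsWithin_Ioo_right hne hQb
  set L₀ : ℝ := sInf (P '' Ioo (0:ℝ) 1) - sInf (Q '' Ioo (0:ℝ) 1) with hL₀
  have hφlim : Tendsto φ (nhdsWithin 0 (Ioi 0)) (nhds L₀) := by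
    have : φ = fun x => P x - Q x := by
      funext x
      have := congrFun hPQ x
      simpa using this
    rw [this, hL₀]
    exact hPlim.sub hQlim
  have hIoo : Ioo (0:ℝ) 1 ∈ nhdsWithin (0:ℝ) (Ioi 0) :=
    Ioo_mem_nhdsGT_of_mem ⟨le_rfl, zero_lt_one⟩
  have hdlim : Tendsto (deriv f) (nhdsWithin 0 (Ioi 0)) (nhds (Real.exp L₀)) := by
    have h1 : Tendsto (fun x => Real.exp (φ x)) (nhdsWithin 0 (Ioi 0))
        (nhds (Real.exp L₀)) := (Real.continuous_exp.tendsto _).comp hφlim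
    refine h1.congr' ?_
    filter_upwards [hIoo] with x hx
    exact Real.exp_log (hposf x (Ioo_subset_Icc_self hx))
  have hkey : deriv f 0 = Real.exp L₀ := by
    by_contra hne0
    rcases lt_or_gt_of_ne hne0 with hlt | hgt
    · set m : ℝ := (deriv f 0 + Real.exp L₀) / 2 with hm
      have hm1 : deriv f 0 < m := by rw [hm]; linarith
      have hm2 : m < Real.exp L₀ := by rw [hm]; linarith
      have hev : ∀ᶠ x in nhdsWithin (0:ℝ) (Ioi 0), m < deriv f x :=
        (tendsto_order.1 hdlim).1 m hm2
      obtain ⟨u, hu, hsub⟩ := mem_nhdsGT_iff_exists_Ioc_subset.1 (hev.and hIoo)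
      have huI : u ∈ Ioc (0:ℝ) u := ⟨hu, le_rfl⟩
      obtain ⟨hmu, huIoo⟩ := hsub huI
      have hder : ∀ x ∈ Icc (0:ℝ) u, HasDerivWithinAt f (deriv f x) (Icc (0:ℝ) u) x :=
        fun x _ => (hfd x).hasDerivAt.hasDerivWithinAt
      obtain ⟨c, hc, hceq⟩ :=
        exists_hasDerivWithinAt_eq_of_gt_of_lt (le_of_lt hu) hder hm1 hmu
      have : m < deriv f c := (hsub ⟨hc.1, hc.2.le⟩).1
      rw [hceq] at this
      exact lt_irrefl m this
    · set m : ℝ := (deriv f 0 + Real.exp L₀) / 2 with hm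
      have hm1 : m < deriv f 0 := by rw [hm]; linarith
      have hm2 : Real.exp L₀ < m := by rw [hm]; linarith
      have hev : ∀ᶠ x in nhdsWithin (0:ℝ) (Ioi 0), deriv f x < m :=
        (tendsto_order.1 hdlim).2 m hm2
      obtain ⟨u, hu, hsub⟩ := mem_nhdsGT_iff_exists_Ioc_subset.1 (hev.and hIoo)
      have huI : u ∈ Ioc (0:ℝ) u := ⟨hu, le_rfl⟩
      obtain ⟨hmu, huIoo⟩ := hsub huI
      have hder : ∀ x ∈ Icc (0:ℝ) u, HasDerivWithinAt f (deriv f x) (Icc (0:ℝ) u) x :=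
        fun x _ => (hfd x).hasDerivAt.hasDerivWithinAt
      obtain ⟨c, hc, hceq⟩ :=
        exists_hasDerivWithinAt_eq_of_lt_of_gt (le_of_lt hu) hder hm1 hmu
      have : deriv f c < m := (hsub ⟨hc.1, hc.2.le⟩).1
      rw [hceq] at this
      exact lt_irrefl m this
  have : Real.log (deriv f 0) = L₀ := by rw [hkey, Real.log_exp]
  rw [this]
  exact hφlim

lemma derivLim1 (hfd : Differentiable ℝ f)
    (hposf : ∀ x ∈ Icc (0:ℝ) 1, 0 < deriv f x)
    (hbv : BoundedVariationOn (fun x => Real.log (deriv f x)) (Icc (0:ℝ) 1)) :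
    Tendsto (fun x => Real.log (deriv f x)) (nhdsWithin 1 (Iio 1))
      (nhds (Real.log (deriv f 1))) := by
  set φ : ℝ → ℝ := fun x => Real.log (deriv f x) with hφ
  obtain ⟨P, Q, hP, hQ, hPQ⟩ :=
    hbv.locallyBoundedVariationOn.exists_monotoneOn_sub_monotoneOn
  have hne : (Ioo (0:ℝ) 1).Nonempty := ⟨1/2, by norm_num⟩
  have hPm : MonotoneOn P (Ioo (0:ℝ) 1) := hP.mono Ioo_subset_Icc_self
  have hQm : MonotoneOn Q (Ioo (0:ℝ) 1) := hQ.mono Ioo_subset_Icc_self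
  have hPb : BddAbove (P '' Ioo (0:ℝ) 1) := by
    refine ⟨P 1, ?_⟩
    rintro _ ⟨x, hx, rfl⟩
    exact hP (Ioo_subset_Icc_self hx) (right_mem_Icc.2 zero_le_one) hx.2.le
  have hQb : BddAbove (Q '' Ioo (0:ℝ) 1) := by
    refine ⟨Q 1, ?_⟩
    rintro _ ⟨x, hx, rfl⟩
    exact hQ (Ioo_subset_Icc_self hx) (right_mem_Icc.2 zero_le_one) hx.2.le
  have hPlim := hPm.tendsto_nhdsWithin_Ioo_left hne hPb
  have hQlim := hQm.tendsto_nhdsWithin_Ioo_left hne hQb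
  set L₀ : ℝ := sSup (P '' Ioo (0:ℝ) 1) - sSup (Q '' Ioo (0:ℝ) 1) with hL₀
  have hφlim : Tendsto φ (nhdsWithin 1 (Iio 1)) (nhds L₀) := by
    have : φ = fun x => P x - Q x := by
      funext x
      have := congrFun hPQ x
      simpa using this
    rw [this, hL₀]
    exact hPlim.sub hQlim
  have hIoo : Ioo (0:ℝ) 1 ∈ nhdsWithin (1:ℝ) (Iio 1) :=
    Ioo_mem_nhdsLT_of_mem ⟨zero_lt_one, le_rfl⟩
  have hdlim : Tendsto (deriv f) (nhdsWithin 1 (Iio 1)) (nhds (Real.exp L₀)) := by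
    have h1 : Tendsto (fun x => Real.exp (φ x)) (nhdsWithin 1 (Iio 1))
        (nhds (Real.exp L₀)) := (Real.continuous_exp.tendsto _).comp hφlim
    refine h1.congr' ?_
    filter_upwards [hIoo] with x hx
    exact Real.exp_log (hposf x (Ioo_subset_Icc_self hx))
  have hkey : deriv f 1 = Real.exp L₀ := by
    by_contra hne0
    rcases lt_or_gt_of_ne hne0 with hlt | hgt
    · set m : ℝ := (deriv f 1 + Real.exp L₀) / 2 with hm
      have hm1 : deriv f 1 < m := by rw [hm]; linarith
      have hm2 : m < Real.exp L₀ := by rw [hm]; linarith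
      have hev : ∀ᶠ x in nhdsWithin (1:ℝ) (Iio 1), m < deriv f x :=
        (tendsto_order.1 hdlim).1 m hm2
      obtain ⟨u, hu, hsub⟩ := mem_nhdsLT_iff_exists_Ico_subset.1 (hev.and hIoo)
      have huI : u ∈ Ico u (1:ℝ) := ⟨le_rfl, hu⟩
      obtain ⟨hmu, huIoo⟩ := hsub huI
      have hder : ∀ x ∈ Icc u (1:ℝ), HasDerivWithinAt f (deriv f x) (Icc u (1:ℝ)) x :=
        fun x _ => (hfd x).hasDerivAt.hasDerivWithinAt
      obtain ⟨c, hc, hceq⟩ :=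
        exists_hasDerivWithinAt_eq_of_lt_of_gt (le_of_lt hu) hder hmu hm1
      have : m < deriv f c := (hsub ⟨hc.1.le, hc.2⟩).1
      rw [hceq] at this
      exact lt_irrefl m this
    · set m : ℝ := (deriv f 1 + Real.exp L₀) / 2 with hm
      have hm1 : m < deriv f 1 := by rw [hm]; linarith
      have hm2 : Real.exp L₀ < m := by rw [hm]; linarith
      have hev : ∀ᶠ x in nhdsWithin (1:ℝ) (Iio 1), deriv f x < m :=
        (tendsto_order.1 hdlim).2 m hm2
      obtain ⟨u, hu, hsub⟩ := mem_nhdsLT_iff_exists_Ico_subset.1 (hev.and hIoo)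
      have huI : u ∈ Ico u (1:ℝ) := ⟨le_rfl, hu⟩
      obtain ⟨hmu, huIoo⟩ := hsub huI
      have hder : ∀ x ∈ Icc u (1:ℝ), HasDerivWithinAt f (deriv f x) (Icc u (1:ℝ)) x :=
        fun x _ => (hfd x).hasDerivAt.hasDerivWithinAt
      obtain ⟨c, hc, hceq⟩ :=
        exists_hasDerivWithinAt_eq_of_gt_of_lt (le_of_lt hu) hder hmu hm1
      have : deriv f c < m := (hsub ⟨hc.1.le, hc.2⟩).1
      rw [hceq] at this
      exact lt_irrefl m this
  have : Real.log (deriv f 1) = L₀ := by rw [hkey, Real.log_exp]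
  rw [this]
  exact hφlim

end Cont

lemma evar_chain_mono (F : ℝ → ℝ) (r : ℕ → ℝ) (hr : ∀ k, r k ≤ r (k + 1)) :
    ∀ A B, A ≤ B →
      ∑ k ∈ Finset.Ico A B, eVariationOn F (Icc (r k) (r (k+1)))
        = eVariationOn F (Icc (r A) (r B)) := by
  have hmono : Monotone r := monotone_nat_of_le_succ hr
  intro A B hAB
  induction B with
  | zero =>
      interval_cases A
      simp [eVariationOn.subsingleton F (Set.subsingleton_Icc_of_ge le_rfl)]
  | succ B ih =>
      rcases Nat.lt_or_ge A (B+1) with h | h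
      · have hAB' : A ≤ B := Nat.lt_succ_iff.mp h
        rw [Finset.sum_Ico_succ_top hAB', ih hAB']
        have := eVariationOn.Icc_add_Icc (s := (univ : Set ℝ)) F (hmono hAB') (hr B) (mem_univ _)
        simpa using this
      · have : A = B + 1 := le_antisymm hAB h
        subst this
        simp [eVariationOn.subsingleton F (Set.subsingleton_Icc_of_ge le_rfl)]

/-- Total variation of `log Df` on a set `s`. -/
noncomputable def varLogDOn (f : ℝ → ℝ) (s : Set ℝ) : ℝ :=
  (eVariationOn (fun x => Real.log (deriv f x)) s).toReal

set_option maxHeartbeats 1000000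

/-- Localization of the asymptotic distortion: for `f` a C¹⁺ᵇᵛ diffeomorphism of `[0,1]`
with `f x > x` on `(0,1)` (with inverse `g`), `p ∈ (0,1)`, and `dist_∞(f) = d`, one has
`var(log Df^{2N}; [f^{−N}p, f^{−N+1}p]) → d` as `N → ∞`. -/
theorem stmt_17 (f g : ℝ → ℝ)
    (hfd : Differentiable ℝ f) (hgd : Differentiable ℝ g)
    (hf0 : f 0 = 0) (hf1 : f 1 = 1)
    (hmapsf : MapsTo f (Icc (0 : ℝ) 1) (Icc (0 : ℝ) 1))
    (hmapsg : MapsTo g (Icc (0 : ℝ) 1) (Icc (0 : ℝ) 1))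
    (hposf : ∀ x ∈ Icc (0 : ℝ) 1, 0 < deriv f x)
    (hgf : ∀ x ∈ Icc (0 : ℝ) 1, g (f x) = x)
    (hfg : ∀ x ∈ Icc (0 : ℝ) 1, f (g x) = x)
    (hmove : ∀ x ∈ Ioo (0 : ℝ) 1, x < f x)
    (hbv : BoundedVariationOn (fun x => Real.log (deriv f x)) (Icc (0 : ℝ) 1))
    (p : ℝ) (hp : p ∈ Ioo (0 : ℝ) 1)
    (d : ℝ)
    (hdist : Tendsto (fun n : ℕ => varLogDOn (f^[n]) (Icc (0 : ℝ) 1) / n) atTop (nhds d)) :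
    Tendsto (fun N : ℕ => varLogDOn (f^[2 * N]) (Icc (g^[N] p) (g^[N - 1] p)))
      atTop (nhds d) := by
  classical
  set φ : ℝ → ℝ := fun x => Real.log (deriv f x) with hφdef
  set q : ℕ → ℝ := fun N => g^[N] p with hqdef
  set r : ℕ → ℝ := fun N => f^[N] p with hrdef
  set Φ : ℕ → ℝ → ℝ := fun n x => ∑ i ∈ Finset.range n, φ (f^[i] x) with hΦdef
  have hpI : p ∈ Icc (0:ℝ) 1 := ⟨hp.1.le, hp.2.le⟩
  -- membership of the orbits
  have qIoo : ∀ k, q k ∈ Ioo (0:ℝ) 1 := by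
    intro k
    induction k with
    | zero => simpa [hqdef] using hp
    | succ k ih =>
        have hk : q k ∈ Icc (0:ℝ) 1 := Ioo_subset_Icc_self ih
        have hmem : g (q k) ∈ Icc (0:ℝ) 1 := hmapsg hk
        have hsucc : q (k+1) = g (q k) := by
          simp only [hqdef]
          rw [Function.iterate_succ_apply']
        rw [hsucc]
        refine ⟨lt_of_le_of_ne hmem.1 ?_, lt_of_le_of_ne hmem.2 ?_⟩
        · intro h
          have := hfg (q k) hk
          rw [← h, hf0] at this
          exact ih.1.ne this
        · intro h
          have := hfg (q k) hk
          rw [h, hf1] at this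
          exact ih.2.ne' this
  have rIoo : ∀ k, r k ∈ Ioo (0:ℝ) 1 := by
    intro k
    induction k with
    | zero => simpa [hrdef] using hp
    | succ k ih =>
        have hk : r k ∈ Icc (0:ℝ) 1 := Ioo_subset_Icc_self ih
        have hsucc : r (k+1) = f (r k) := by
          simp only [hrdef]
          rw [Function.iterate_succ_apply']
        rw [hsucc]
        constructor
        · exact lt_trans ih.1 (hmove _ ih)
        · have := fmono hfd hposf hk (right_mem_Icc.2 zero_le_one) ih.2
          rwa [hf1] at this
  have qIcc : ∀ k, q k ∈ Icc (0:ℝ) 1 := fun k => Ioo_subset_Icc_self (qIoo k)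
  have rIcc : ∀ k, r k ∈ Icc (0:ℝ) 1 := fun k => Ioo_subset_Icc_self (rIoo k)
  have qsucc : ∀ k, q (k+1) = g (q k) := by
    intro k
    simp only [hqdef]
    rw [Function.iterate_succ_apply']
  have rsucc : ∀ k, r (k+1) = f (r k) := by
    intro k
    simp only [hrdef]
    rw [Function.iterate_succ_apply']
  have qdec : ∀ k, q (k+1) ≤ q k := by
    intro k
    rw [qsucc k]
    have h1 : g (q k) ∈ Ioo (0:ℝ) 1 := by
      rw [← qsucc k]; exact qIoo (k+1)
    have := hmove _ h1
    rw [hfg _ (qIcc k)] at this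
    exact this.le
  have rinc : ∀ k, r k ≤ r (k+1) := by
    intro k
    rw [rsucc k]
    exact (hmove _ (rIoo k)).le
  have qanti : Antitone q := antitone_nat_of_succ_le qdec
  have rmono : Monotone r := monotone_nat_of_le_succ rinc
  have hiter_q : ∀ i k, f^[i] (q (i + k)) = q k := by
    intro i
    induction i with
    | zero => intro k; simp
    | succ i ih =>
        intro k
        have h1 : i + 1 + k = (i + k) + 1 := by omega
        rw [h1, qsucc (i+k), Function.iterate_succ_apply, hfg _ (qIcc (i+k))]
        exact ih k
  have hiter_r : ∀ k m, f^[k + m] (q k) = r m := by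
    intro k m
    have h1 : k + m = m + k := by omega
    rw [h1, Function.iterate_add_apply]
    have h2 : f^[k] (q k) = p := by
      simp only [hqdef]
      exact fgIter hmapsg hfg k p hpI
    rw [h2]
  have hiter0 : ∀ i : ℕ, f^[i] 0 = 0 := fun i => Function.iterate_fixed hf0 i
  have hiter1 : ∀ i : ℕ, f^[i] 1 = 1 := fun i => Function.iterate_fixed hf1 i
  -- variation quantities
  set Vφ : ℝ≥0∞ := eVariationOn φ (Icc 0 1) with hVφdef
  have hVφ : Vφ ≠ ⊤ := hbv
  set εL : ℕ → ℝ≥0∞ := fun N => eVariationOn φ (Icc 0 (q N)) with hεLdef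
  set εR : ℕ → ℝ≥0∞ := fun N => eVariationOn φ (Icc (r N) 1) with hεRdef
  have hεLle : ∀ N, εL N ≤ Vφ := fun N =>
    eVariationOn.mono φ (Icc_subset_Icc le_rfl (qIcc N).2)
  have hεRle : ∀ N, εR N ≤ Vφ := fun N =>
    eVariationOn.mono φ (Icc_subset_Icc (rIcc N).1 le_rfl)
  -- composition bounds
  have hcomp_le : ∀ (i : ℕ) (a b : ℝ), a ∈ Icc (0:ℝ) 1 → b ∈ Icc (0:ℝ) 1 →
      eVariationOn (fun x => φ (f^[i] x)) (Icc a b)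
        ≤ eVariationOn φ (Icc (f^[i] a) (f^[i] b)) := by
    intro i a b ha hb
    have hsub : Icc a b ⊆ Icc (0:ℝ) 1 :=
      fun x hx => ⟨le_trans ha.1 hx.1, le_trans hx.2 hb.2⟩
    have hmono : MonotoneOn (f^[i]) (Icc a b) := (iterMono hfd hposf hmapsf i).mono hsub
    have hmaps : MapsTo (f^[i]) (Icc a b) (Icc (f^[i] a) (f^[i] b)) := by
      intro x hx
      have hx1 : x ∈ Icc (0:ℝ) 1 := hsub hx
      exact ⟨iterMono hfd hposf hmapsf i ha hx1 hx.1,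
        iterMono hfd hposf hmapsf i hx1 hb hx.2⟩
    exact eVariationOn.comp_le_of_monotoneOn φ (f^[i]) hmono hmaps
  have hcomp_triv : ∀ (i : ℕ) (a b : ℝ), a ∈ Icc (0:ℝ) 1 → b ∈ Icc (0:ℝ) 1 →
      eVariationOn (fun x => φ (f^[i] x)) (Icc a b) ≤ Vφ := by
    intro i a b ha hb
    have hsub : Icc a b ⊆ Icc (0:ℝ) 1 :=
      fun x hx => ⟨le_trans ha.1 hx.1, le_trans hx.2 hb.2⟩
    have hmono : MonotoneOn (f^[i]) (Icc a b) := (iterMono hfd hposf hmapsf i).mono hsub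
    have hmaps : MapsTo (f^[i]) (Icc a b) (Icc (0:ℝ) 1) :=
      fun x hx => hmapsf.iterate i (hsub hx)
    exact eVariationOn.comp_le_of_monotoneOn φ (f^[i]) hmono hmaps
  have hVar_eq : ∀ (n : ℕ) (s : Set ℝ), s ⊆ Icc (0:ℝ) 1 →
      eVariationOn (fun x => Real.log (deriv (f^[n]) x)) s = eVariationOn (Φ n) s := by
    intro n s hs
    exact eVariationOn.eq_of_eqOn ((logSumIter hfd hposf hmapsf n).mono hs)
  have hΦbound : ∀ (n : ℕ) (a b : ℝ), a ∈ Icc (0:ℝ) 1 → b ∈ Icc (0:ℝ) 1 →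
      eVariationOn (Φ n) (Icc a b) ≤ (n : ℝ≥0∞) * Vφ := by
    intro n a b ha hb
    calc eVariationOn (Φ n) (Icc a b)
        ≤ ∑ i ∈ Finset.range n, eVariationOn (fun x => φ (f^[i] x)) (Icc a b) :=
          evar_sum_le (Finset.range n) (fun i x => φ (f^[i] x)) (Icc a b)
      _ ≤ ∑ _i ∈ Finset.range n, Vφ :=
          Finset.sum_le_sum fun i _ => hcomp_triv i a b ha hb
      _ = (n : ℝ≥0∞) * Vφ := by
          rw [Finset.sum_const, Finset.card_range, nsmul_eq_mul]
  -- the main per-(M, s) double inequality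
  have main : ∀ M s : ℕ,
      ((s:ℝ≥0∞) + 1) * eVariationOn (Φ (2*M+2)) (Icc (q (M+1)) (q M))
          ≤ eVariationOn (Φ (2*M+2+s)) (Icc 0 1)
            + ((s:ℝ≥0∞)+1) * (εL (M+1) + εR (M+1))
      ∧ eVariationOn (Φ (2*M+2+s)) (Icc 0 1)
          ≤ ((s:ℝ≥0∞)+1) * eVariationOn (Φ (2*M+2)) (Icc (q (M+1)) (q M))
            + ((s:ℝ≥0∞)+1) * (εL (M+1) + εR (M+1))
            + ((2*M+2+s : ℕ) : ℝ≥0∞) * (εL (M+1) + εR (M+1))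
            + ((4*M+4 : ℕ) : ℝ≥0∞) * Vφ := by
    intro M s
    set n : ℕ := 2*M+2+s with hndef
    set A : ℝ≥0∞ := eVariationOn (Φ (2*M+2)) (Icc (q (M+1)) (q M)) with hAdef
    set ε2 : ℝ≥0∞ := εL (M+1) + εR (M+1) with hε2def
    -- per-tile two-sided estimate
    have tile : ∀ j, j ≤ s →
        A ≤ eVariationOn (Φ n) (Icc (q (M+1+j)) (q (M+j))) + ε2 ∧
        eVariationOn (Φ n) (Icc (q (M+1+j)) (q (M+j))) ≤ A + ε2 := by
      intro j hj
      have hTsub : Icc (q (M+1+j)) (q (M+j)) ⊆ Icc (0:ℝ) 1 :=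
        fun x hx => ⟨le_trans (qIcc _).1 hx.1, le_trans hx.2 (qIcc _).2⟩
      have hqle : q (M+1+j) ≤ q (M+j) := by
        have h : M+1+j = (M+j)+1 := by omega
        rw [h]; exact qdec (M+j)
      set RL : ℝ → ℝ := fun x => ∑ i ∈ Finset.range j, φ (f^[i] x) with hRLdef
      set CC : ℝ → ℝ := fun x => Φ (2*M+2) (f^[j] x) with hCCdef
      set RR : ℝ → ℝ := fun x => ∑ i ∈ Finset.Ico (j+(2*M+2)) n, φ (f^[i] x) with hRRdef
      have hsplitfun : ∀ x, Φ n x = RL x + CC x + RR x := by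
        intro x
        have hcore : (∑ i ∈ Finset.Ico j (j+(2*M+2)), φ (f^[i] x)) = CC x := by
          rw [hCCdef]
          simp only [hΦdef]
          rw [Finset.sum_Ico_eq_sum_range]
          have hlen : j + (2*M+2) - j = 2*M+2 := by omega
          rw [hlen]
          refine Finset.sum_congr rfl fun i _ => ?_
          congr 1
          rw [add_comm j i, Function.iterate_add_apply]
        have h1 : (∑ i ∈ Finset.Ico 0 j, φ (f^[i] x))
            + (∑ i ∈ Finset.Ico j (j+(2*M+2)), φ (f^[i] x))
            = ∑ i ∈ Finset.Ico 0 (j+(2*M+2)), φ (f^[i] x) :=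
          Finset.sum_Ico_consecutive _ (Nat.zero_le j) (by omega)
        have h2 : (∑ i ∈ Finset.Ico 0 (j+(2*M+2)), φ (f^[i] x))
            + (∑ i ∈ Finset.Ico (j+(2*M+2)) n, φ (f^[i] x))
            = ∑ i ∈ Finset.Ico 0 n, φ (f^[i] x) :=
          Finset.sum_Ico_consecutive _ (Nat.zero_le _) (by omega)
        have h3 : Φ n x = ∑ i ∈ Finset.Ico 0 n, φ (f^[i] x) := by
          simp only [hΦdef]
          rw [Finset.range_eq_Ico]
        rw [h3, ← h2, ← h1, hcore]
        have h4 : RL x = ∑ i ∈ Finset.Ico 0 j, φ (f^[i] x) := by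
          rw [hRLdef]
          simp only
          rw [Finset.range_eq_Ico]
        rw [h4]
      have hfuneq : Φ n = fun x => RL x + CC x + RR x := funext hsplitfun
      have hcore_var : eVariationOn CC (Icc (q (M+1+j)) (q (M+j))) = A := by
        have hmono : MonotoneOn (f^[j]) (Icc (q (M+1+j)) (q (M+j))) :=
          (iterMono hfd hposf hmapsf j).mono hTsub
        have h1 : eVariationOn (Φ (2*M+2) ∘ f^[j]) (Icc (q (M+1+j)) (q (M+j)))
            = eVariationOn (Φ (2*M+2)) (f^[j] '' Icc (q (M+1+j)) (q (M+j))) :=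
          eVariationOn.comp_eq_of_monotoneOn _ _ hmono
        have himg := imageIter hfd hposf hmapsf hmapsg hgf hfg j
          (qIcc (M+1+j)) (qIcc (M+j)) hqle
        have he1 : f^[j] (q (M+1+j)) = q (M+1) := by
          have h : M+1+j = j + (M+1) := by omega
          rw [h]; exact hiter_q j (M+1)
        have he2 : f^[j] (q (M+j)) = q M := by
          have h : M+j = j + M := by omega
          rw [h]; exact hiter_q j M
        rw [himg, he1, he2] at h1
        exact h1
      have hRL_var : eVariationOn RL (Icc (q (M+1+j)) (q (M+j))) ≤ εL (M+1) := by
        calc eVariationOn RL (Icc (q (M+1+j)) (q (M+j)))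
            ≤ ∑ i ∈ Finset.range j,
                eVariationOn (fun x => φ (f^[i] x)) (Icc (q (M+1+j)) (q (M+j))) :=
              evar_sum_le (Finset.range j) (fun i x => φ (f^[i] x)) _
          _ ≤ ∑ i ∈ Finset.range j, eVariationOn φ (Icc (q (M+1+j-i)) (q (M+j-i))) := by
              refine Finset.sum_le_sum fun i hi => ?_
              rw [Finset.mem_range] at hi
              have h1 := hcomp_le i _ _ (qIcc (M+1+j)) (qIcc (M+j))
              have he1 : f^[i] (q (M+1+j)) = q (M+1+j-i) := by
                have h := hiter_q i (M+1+j-i)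
                rwa [show i + (M+1+j-i) = M+1+j from by omega] at h
              have he2 : f^[i] (q (M+j)) = q (M+j-i) := by
                have h := hiter_q i (M+j-i)
                rwa [show i + (M+j-i) = M+j from by omega] at h
              rwa [he1, he2] at h1
          _ = ∑ i ∈ Finset.range j,
                eVariationOn φ (Icc (q (M+1+(i+1))) (q (M+1+i))) := by
              rw [← Finset.sum_range_reflect]
              refine Finset.sum_congr rfl fun i hi => ?_
              rw [Finset.mem_range] at hi
              have e1 : M+1+j-(j-1-i) = M+1+(i+1) := by omega
              have e2 : M+j-(j-1-i) = M+1+i := by omega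
              rw [e1, e2]
          _ = eVariationOn φ (Icc (q (M+1+j)) (q (M+1+0))) := by
              have hch := evar_chain φ (fun k => q (M+1+k)) (fun k => by
                show q (M+1+(k+1)) ≤ q (M+1+k)
                rw [show M+1+(k+1) = (M+1+k)+1 from by omega]
                exact qdec _) 0 j (Nat.zero_le j)
              rw [← Finset.range_eq_Ico] at hch
              exact hch
          _ ≤ εL (M+1) := by
              refine eVariationOn.mono φ ?_
              intro x hx
              exact ⟨le_trans (qIcc _).1 hx.1, hx.2⟩
      have hRR_var : eVariationOn RR (Icc (q (M+1+j)) (q (M+j))) ≤ εR (M+1) := by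
        calc eVariationOn RR (Icc (q (M+1+j)) (q (M+j)))
            ≤ ∑ i ∈ Finset.Ico (j+(2*M+2)) n,
                eVariationOn (fun x => φ (f^[i] x)) (Icc (q (M+1+j)) (q (M+j))) :=
              evar_sum_le (Finset.Ico (j+(2*M+2)) n) (fun i x => φ (f^[i] x)) _
          _ ≤ ∑ i ∈ Finset.Ico (j+(2*M+2)) n,
                eVariationOn φ (Icc (r (i-(M+1+j))) (r (i-(M+j)))) := by
              refine Finset.sum_le_sum fun i hi => ?_
              rw [Finset.mem_Ico] at hi
              obtain ⟨m, rfl⟩ : ∃ m, i = (M+1+j) + m := ⟨i - (M+1+j), by omega⟩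
              have h1 := hcomp_le ((M+1+j)+m) _ _ (qIcc (M+1+j)) (qIcc (M+j))
              have he1 : f^[(M+1+j)+m] (q (M+1+j)) = r m := hiter_r (M+1+j) m
              have he2 : f^[(M+1+j)+m] (q (M+j)) = r (m+1) := by
                have h : (M+1+j)+m = (M+j) + (m+1) := by omega
                rw [h]; exact hiter_r (M+j) (m+1)
              have e1 : (M+1+j)+m - (M+1+j) = m := by omega
              have e2 : (M+1+j)+m - (M+j) = m+1 := by omega
              rw [e1, e2]
              rwa [he1, he2] at h1
          _ = ∑ i ∈ Finset.range (s-j),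
                eVariationOn φ (Icc (r (M+1+i)) (r (M+1+(i+1)))) := by
              rw [Finset.sum_Ico_eq_sum_range]
              have hlen : n - (j+(2*M+2)) = s - j := by omega
              rw [hlen]
              refine Finset.sum_congr rfl fun i hi => ?_
              rw [Finset.mem_range] at hi
              have e1 : (j+(2*M+2)+i) - (M+1+j) = M+1+i := by omega
              have e2 : (j+(2*M+2)+i) - (M+j) = M+1+(i+1) := by omega
              rw [e1, e2]
          _ = eVariationOn φ (Icc (r (M+1+0)) (r (M+1+(s-j)))) := by
              have hch := evar_chain_mono φ (fun k => r (M+1+k)) (fun k => by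
                show r (M+1+k) ≤ r (M+1+(k+1))
                rw [show M+1+(k+1) = (M+1+k)+1 from by omega]
                exact rinc _) 0 (s-j) (Nat.zero_le _)
              rw [← Finset.range_eq_Ico] at hch
              exact hch
          _ ≤ εR (M+1) := by
              refine eVariationOn.mono φ ?_
              intro x hx
              exact ⟨hx.1, le_trans hx.2 (rIcc _).2⟩
      have hup : eVariationOn (Φ n) (Icc (q (M+1+j)) (q (M+j))) ≤ A + ε2 := by
        rw [hfuneq]
        calc eVariationOn (fun x => RL x + CC x + RR x) (Icc (q (M+1+j)) (q (M+j)))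
            ≤ eVariationOn (fun x => RL x + CC x) (Icc (q (M+1+j)) (q (M+j)))
              + eVariationOn RR (Icc (q (M+1+j)) (q (M+j))) :=
              evar_add_le (fun x => RL x + CC x) RR _
          _ ≤ eVariationOn RL (Icc (q (M+1+j)) (q (M+j)))
              + eVariationOn CC (Icc (q (M+1+j)) (q (M+j)))
              + eVariationOn RR (Icc (q (M+1+j)) (q (M+j))) :=
              add_le_add_left (evar_add_le RL CC _) _
          _ ≤ εL (M+1) + A + εR (M+1) :=
              add_le_add (add_le_add hRL_var hcore_var.le) hRR_var
          _ = A + ε2 := by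
              rw [hε2def]
              ring
      have hlow : A ≤ eVariationOn (Φ n) (Icc (q (M+1+j)) (q (M+j))) + ε2 := by
        have hC2 : CC = fun x => (Φ n x + -(RL x)) + -(RR x) := by
          funext x
          have h := hsplitfun x
          linarith
        calc A = eVariationOn CC (Icc (q (M+1+j)) (q (M+j))) := hcore_var.symm
          _ = eVariationOn (fun x => (Φ n x + -(RL x)) + -(RR x))
              (Icc (q (M+1+j)) (q (M+j))) := by rw [hC2]
          _ ≤ eVariationOn (fun x => Φ n x + -(RL x)) (Icc (q (M+1+j)) (q (M+j)))
              + eVariationOn (fun x => -(RR x)) (Icc (q (M+1+j)) (q (M+j))) :=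
              evar_add_le (fun x => Φ n x + -(RL x)) (fun x => -(RR x)) _
          _ ≤ eVariationOn (Φ n) (Icc (q (M+1+j)) (q (M+j)))
              + eVariationOn (fun x => -(RL x)) (Icc (q (M+1+j)) (q (M+j)))
              + eVariationOn (fun x => -(RR x)) (Icc (q (M+1+j)) (q (M+j))) :=
              add_le_add_left (evar_add_le (Φ n) (fun x => -(RL x)) _) _
          _ = eVariationOn (Φ n) (Icc (q (M+1+j)) (q (M+j)))
              + eVariationOn RL (Icc (q (M+1+j)) (q (M+j)))
              + eVariationOn RR (Icc (q (M+1+j)) (q (M+j))) := by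
              rw [evar_neg RL, evar_neg RR]
          _ ≤ eVariationOn (Φ n) (Icc (q (M+1+j)) (q (M+j))) + εL (M+1) + εR (M+1) :=
              add_le_add (add_le_add le_rfl hRL_var) hRR_var
          _ = eVariationOn (Φ n) (Icc (q (M+1+j)) (q (M+j))) + ε2 := by
              rw [hε2def, add_assoc]
      exact ⟨hlow, hup⟩
    -- the middle chain
    have hmid : ∑ k ∈ Finset.range (s+1),
        eVariationOn (Φ n) (Icc (q (M+1+k)) (q (M+k)))
        = eVariationOn (Φ n) (Icc (q (M+(s+1))) (q M)) := by
      have hch := evar_chain (Φ n) (fun k => q (M+k)) (fun k => by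
        show q (M+(k+1)) ≤ q (M+k)
        rw [show M+(k+1) = (M+k)+1 from by omega]
        exact qdec _) 0 (s+1) (Nat.zero_le _)
      rw [← Finset.range_eq_Ico] at hch
      refine Eq.trans ?_ hch
      refine Finset.sum_congr rfl fun k _ => ?_
      have h : M+1+k = M+(k+1) := by omega
      rw [h]
    have hq_ms : q (M+(s+1)) = q (M+1+s) := by
      have h : M+(s+1) = M+1+s := by omega
      rw [h]
    -- end pieces
    have hendL : eVariationOn (Φ n) (Icc 0 (q (M+1+s)))
        ≤ (n:ℝ≥0∞) * εL (M+1) + ((2*M+2 : ℕ):ℝ≥0∞) * Vφ := by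
      calc eVariationOn (Φ n) (Icc 0 (q (M+1+s)))
          ≤ ∑ i ∈ Finset.range n,
              eVariationOn (fun x => φ (f^[i] x)) (Icc 0 (q (M+1+s))) :=
            evar_sum_le (Finset.range n) (fun i x => φ (f^[i] x)) _
        _ = (∑ i ∈ Finset.Ico 0 (s+1),
              eVariationOn (fun x => φ (f^[i] x)) (Icc 0 (q (M+1+s))))
            + ∑ i ∈ Finset.Ico (s+1) n,
              eVariationOn (fun x => φ (f^[i] x)) (Icc 0 (q (M+1+s))) := by
            rw [Finset.sum_Ico_consecutive _ (Nat.zero_le (s+1)) (show s+1 ≤ n by omega),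
              Finset.range_eq_Ico]
        _ ≤ (Finset.Ico 0 (s+1)).card • εL (M+1) + (Finset.Ico (s+1) n).card • Vφ := by
            refine add_le_add ?_ ?_
            · refine Finset.sum_le_card_nsmul _ _ _ ?_
              intro i hi
              rw [Finset.mem_Ico] at hi
              have h1 := hcomp_le i 0 (q (M+1+s)) (left_mem_Icc.2 zero_le_one) (qIcc _)
              rw [hiter0 i] at h1
              refine le_trans h1 ?_
              have he1 : f^[i] (q (M+1+s)) = q (M+1+s-i) := by
                have h := hiter_q i (M+1+s-i)
                rwa [show i + (M+1+s-i) = M+1+s from by omega] at h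
              rw [he1]
              exact eVariationOn.mono φ
                (Icc_subset_Icc le_rfl (qanti (show M+1 ≤ M+1+s-i by omega)))
            · refine Finset.sum_le_card_nsmul _ _ _ ?_
              intro i hi
              exact hcomp_triv i 0 (q (M+1+s)) (left_mem_Icc.2 zero_le_one) (qIcc _)
        _ ≤ (n:ℝ≥0∞) * εL (M+1) + ((2*M+2 : ℕ):ℝ≥0∞) * Vφ := by
            rw [nsmul_eq_mul, nsmul_eq_mul, Nat.card_Ico, Nat.card_Ico]
            refine add_le_add (mul_le_mul_left ?_ _) (mul_le_mul_left ?_ _)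
            · exact_mod_cast Nat.cast_le.2 (show s+1-0 ≤ n by omega)
            · exact_mod_cast Nat.cast_le.2 (show n-(s+1) ≤ 2*M+2 by omega)
    have hendR : eVariationOn (Φ n) (Icc (q M) 1)
        ≤ (n:ℝ≥0∞) * εR (M+1) + ((2*M+2 : ℕ):ℝ≥0∞) * Vφ := by
      calc eVariationOn (Φ n) (Icc (q M) 1)
          ≤ ∑ i ∈ Finset.range n,
              eVariationOn (fun x => φ (f^[i] x)) (Icc (q M) 1) :=
            evar_sum_le (Finset.range n) (fun i x => φ (f^[i] x)) _
        _ = (∑ i ∈ Finset.Ico 0 (2*M+1),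
              eVariationOn (fun x => φ (f^[i] x)) (Icc (q M) 1))
            + ∑ i ∈ Finset.Ico (2*M+1) n,
              eVariationOn (fun x => φ (f^[i] x)) (Icc (q M) 1) := by
            rw [Finset.sum_Ico_consecutive _ (Nat.zero_le (2*M+1)) (show 2*M+1 ≤ n by omega),
              Finset.range_eq_Ico]
        _ ≤ (Finset.Ico 0 (2*M+1)).card • Vφ + (Finset.Ico (2*M+1) n).card • εR (M+1) := by
            refine add_le_add ?_ ?_
            · refine Finset.sum_le_card_nsmul _ _ _ ?_
              intro i hi
              exact hcomp_triv i (q M) 1 (qIcc M) (right_mem_Icc.2 zero_le_one)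
            · refine Finset.sum_le_card_nsmul _ _ _ ?_
              intro i hi
              rw [Finset.mem_Ico] at hi
              obtain ⟨m, rfl⟩ : ∃ m, i = M + m := ⟨i - M, by omega⟩
              have h1 := hcomp_le (M+m) (q M) 1 (qIcc M) (right_mem_Icc.2 zero_le_one)
              rw [hiter1 (M+m), hiter_r M m] at h1
              refine le_trans h1 ?_
              exact eVariationOn.mono φ
                (Icc_subset_Icc (rmono (show M+1 ≤ m by omega)) le_rfl)
        _ ≤ (n:ℝ≥0∞) * εR (M+1) + ((2*M+2 : ℕ):ℝ≥0∞) * Vφ := by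
            rw [nsmul_eq_mul, nsmul_eq_mul, Nat.card_Ico, Nat.card_Ico, add_comm]
            refine add_le_add (mul_le_mul_left ?_ _) (mul_le_mul_left ?_ _)
            · exact_mod_cast Nat.cast_le.2 (show n-(2*M+1) ≤ n by omega)
            · exact_mod_cast Nat.cast_le.2 (show 2*M+1-0 ≤ 2*M+2 by omega)
    -- splitting of the total variation
    have hsplit1 : eVariationOn (Φ n) (Icc 0 (q M))
        = eVariationOn (Φ n) (Icc 0 (q (M+1+s)))
          + eVariationOn (Φ n) (Icc (q (M+1+s)) (q M)) := by
      have h := eVariationOn.Icc_add_Icc (s := (univ : Set ℝ)) (Φ n)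
        (show (0:ℝ) ≤ q (M+1+s) from (qIcc _).1)
        (show q (M+1+s) ≤ q M from qanti (by omega)) (mem_univ _)
      simpa using h.symm
    have hsplit2 : eVariationOn (Φ n) (Icc 0 1)
        = eVariationOn (Φ n) (Icc 0 (q M)) + eVariationOn (Φ n) (Icc (q M) 1) := by
      have h := eVariationOn.Icc_add_Icc (s := (univ : Set ℝ)) (Φ n)
        (show (0:ℝ) ≤ q M from (qIcc _).1)
        (show q M ≤ 1 from (qIcc _).2) (mem_univ _)
      simpa using h.symm
    have hcast : ((s+1 : ℕ) : ℝ≥0∞) = (s:ℝ≥0∞)+1 := by push_cast; ring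
    constructor
    · -- lower bound
      calc ((s:ℝ≥0∞)+1) * A = ∑ _k ∈ Finset.range (s+1), A := by
            rw [Finset.sum_const, Finset.card_range, nsmul_eq_mul, hcast]
        _ ≤ ∑ k ∈ Finset.range (s+1),
              (eVariationOn (Φ n) (Icc (q (M+1+k)) (q (M+k))) + ε2) := by
            refine Finset.sum_le_sum fun k hk => ?_
            rw [Finset.mem_range] at hk
            exact (tile k (by omega)).1
        _ = (∑ k ∈ Finset.range (s+1),
              eVariationOn (Φ n) (Icc (q (M+1+k)) (q (M+k))))
            + ((s+1 : ℕ) : ℝ≥0∞) * ε2 := by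
            rw [Finset.sum_add_distrib, Finset.sum_const, Finset.card_range, nsmul_eq_mul]
        _ ≤ eVariationOn (Φ n) (Icc 0 1) + ((s:ℝ≥0∞)+1) * ε2 := by
            rw [hmid, hcast]
            refine add_le_add (eVariationOn.mono _ ?_) le_rfl
            intro x hx
            exact ⟨le_trans (qIcc _).1 hx.1, le_trans hx.2 (qIcc _).2⟩
    · -- upper bound
      calc eVariationOn (Φ n) (Icc 0 1)
          = eVariationOn (Φ n) (Icc 0 (q (M+1+s)))
            + eVariationOn (Φ n) (Icc (q (M+1+s)) (q M))
            + eVariationOn (Φ n) (Icc (q M) 1) := by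
            rw [hsplit2, hsplit1]
        _ ≤ ((n:ℝ≥0∞) * εL (M+1) + ((2*M+2 : ℕ):ℝ≥0∞) * Vφ)
            + ((s:ℝ≥0∞)+1) * (A + ε2)
            + ((n:ℝ≥0∞) * εR (M+1) + ((2*M+2 : ℕ):ℝ≥0∞) * Vφ) := by
            refine add_le_add (add_le_add hendL ?_) hendR
            have hsum : eVariationOn (Φ n) (Icc (q (M+1+s)) (q M))
                ≤ ∑ _k ∈ Finset.range (s+1), (A + ε2) := by
              rw [← hq_ms, ← hmid]
              refine Finset.sum_le_sum fun k hk => ?_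
              rw [Finset.mem_range] at hk
              exact (tile k (by omega)).2
            refine le_trans hsum ?_
            rw [Finset.sum_const, Finset.card_range, nsmul_eq_mul, hcast]
        _ = ((s:ℝ≥0∞)+1) * A + ((s:ℝ≥0∞)+1) * ε2 + (n:ℝ≥0∞) * ε2
            + ((4*M+4 : ℕ) : ℝ≥0∞) * Vφ := by
            rw [hε2def]
            push_cast
            ring
  -- real versions
  set a : ℕ → ℝ := fun M => (eVariationOn (Φ (2*M+2)) (Icc (q (M+1)) (q M))).toReal with hadef
  set e : ℕ → ℝ := fun M => (εL (M+1) + εR (M+1)).toReal with hedef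
  set v : ℕ → ℝ := fun n => (eVariationOn (Φ n) (Icc 0 1)).toReal with hvdef
  have hA_ne : ∀ M, eVariationOn (Φ (2*M+2)) (Icc (q (M+1)) (q M)) ≠ ⊤ := by
    intro M
    exact ne_top_of_le_ne_top (ENNReal.mul_ne_top (ENNReal.natCast_ne_top _) hVφ)
      (hΦbound _ _ _ (qIcc _) (qIcc _))
  have hVn_ne : ∀ n, eVariationOn (Φ n) (Icc 0 1) ≠ ⊤ := by
    intro n
    exact ne_top_of_le_ne_top (ENNReal.mul_ne_top (ENNReal.natCast_ne_top _) hVφ)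
      (hΦbound _ _ _ (left_mem_Icc.2 zero_le_one) (right_mem_Icc.2 zero_le_one))
  have hε_ne : ∀ M, εL (M+1) + εR (M+1) ≠ ⊤ :=
    fun M => ENNReal.add_ne_top.2 ⟨ne_top_of_le_ne_top hVφ (hεLle _),
      ne_top_of_le_ne_top hVφ (hεRle _)⟩
  have mainR : ∀ M s : ℕ,
      ((s:ℝ) + 1) * a M ≤ v (2*M+2+s) + ((s:ℝ)+1) * e M
      ∧ v (2*M+2+s) ≤ ((s:ℝ)+1) * a M + ((s:ℝ)+1) * e M
          + ((2*M+2+s : ℕ) : ℝ) * e M + ((4*M+4 : ℕ) : ℝ) * Vφ.toReal := by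
    intro M s
    obtain ⟨h1, h2⟩ := main M s
    have hs1 : ((s:ℝ≥0∞) + 1) ≠ ⊤ := by
      exact ENNReal.add_ne_top.2 ⟨ENNReal.natCast_ne_top s, ENNReal.one_ne_top⟩
    have hs1R : ((s:ℝ≥0∞) + 1).toReal = (s:ℝ) + 1 := by
      rw [ENNReal.toReal_add (ENNReal.natCast_ne_top s) ENNReal.one_ne_top]
      simp
    constructor
    · have hRne : eVariationOn (Φ (2*M+2+s)) (Icc 0 1)
          + ((s:ℝ≥0∞)+1) * (εL (M+1) + εR (M+1)) ≠ ⊤ :=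
        ENNReal.add_ne_top.2 ⟨hVn_ne _, ENNReal.mul_ne_top hs1 (hε_ne M)⟩
      have := ENNReal.toReal_mono hRne h1
      rwa [ENNReal.toReal_mul, ENNReal.toReal_add (hVn_ne _)
          (ENNReal.mul_ne_top hs1 (hε_ne M)), ENNReal.toReal_mul, hs1R] at this
    · have hRne : ((s:ℝ≥0∞)+1) * eVariationOn (Φ (2*M+2)) (Icc (q (M+1)) (q M))
          + ((s:ℝ≥0∞)+1) * (εL (M+1) + εR (M+1))
          + ((2*M+2+s : ℕ) : ℝ≥0∞) * (εL (M+1) + εR (M+1))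
          + ((4*M+4 : ℕ) : ℝ≥0∞) * Vφ ≠ ⊤ := by
        refine ENNReal.add_ne_top.2 ⟨ENNReal.add_ne_top.2 ⟨ENNReal.add_ne_top.2
          ⟨?_, ?_⟩, ?_⟩, ?_⟩
        · exact ENNReal.mul_ne_top hs1 (hA_ne M)
        · exact ENNReal.mul_ne_top hs1 (hε_ne M)
        · exact ENNReal.mul_ne_top (ENNReal.natCast_ne_top _) (hε_ne M)
        · exact ENNReal.mul_ne_top (ENNReal.natCast_ne_top _) hVφ
      have := ENNReal.toReal_mono hRne h2
      rwa [ENNReal.toReal_add (ENNReal.add_ne_top.2 ⟨ENNReal.add_ne_top.2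
          ⟨ENNReal.mul_ne_top hs1 (hA_ne M), ENNReal.mul_ne_top hs1 (hε_ne M)⟩,
          ENNReal.mul_ne_top (ENNReal.natCast_ne_top _) (hε_ne M)⟩)
          (ENNReal.mul_ne_top (ENNReal.natCast_ne_top _) hVφ),
        ENNReal.toReal_add (ENNReal.add_ne_top.2
          ⟨ENNReal.mul_ne_top hs1 (hA_ne M), ENNReal.mul_ne_top hs1 (hε_ne M)⟩)
          (ENNReal.mul_ne_top (ENNReal.natCast_ne_top _) (hε_ne M)),
        ENNReal.toReal_add (ENNReal.mul_ne_top hs1 (hA_ne M))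
          (ENNReal.mul_ne_top hs1 (hε_ne M)),
        ENNReal.toReal_mul, ENNReal.toReal_mul, ENNReal.toReal_mul, ENNReal.toReal_mul,
        hs1R, ENNReal.toReal_natCast, ENNReal.toReal_natCast] at this
  have hv_eq : ∀ n : ℕ, varLogDOn (f^[n]) (Icc (0:ℝ) 1) = v n := by
    intro n
    rw [hvdef, varLogDOn, hVar_eq n _ (subset_refl _)]
  have hv_lim : Tendsto (fun n : ℕ => v n / n) atTop (nhds d) := by
    refine hdist.congr ?_
    intro n
    rw [hv_eq n]
  have e_nonneg : ∀ M, 0 ≤ e M := fun M => ENNReal.toReal_nonneg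
  have key1 : ∀ M, a M ≤ d + e M := by
    intro M
    set c : ℕ → ℝ := fun n => ((n:ℝ) - (2*(M:ℝ)+1))/(n:ℝ) with hcdef
    have hc : Tendsto c atTop (nhds 1) := by
      have h0 : Tendsto (fun n : ℕ => 1 - (2*(M:ℝ)+1)/(n:ℝ)) atTop (nhds (1 - 0)) :=
        tendsto_const_nhds.sub (tendsto_const_div_atTop_nhds_zero_nat _)
      rw [sub_zero] at h0
      refine h0.congr' ?_
      filter_upwards [eventually_ge_atTop 1] with n hn
      have hn0 : (n:ℝ) ≠ 0 := Nat.cast_ne_zero.2 (by omega)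
      rw [hcdef]
      simp only
      rw [sub_div, div_self hn0]
    have hle : ∀ᶠ n : ℕ in atTop, a M * c n ≤ v n / n + e M * c n := by
      filter_upwards [eventually_ge_atTop (2*M+2)] with n hn
      obtain ⟨s, rfl⟩ : ∃ s, n = 2*M+2+s := ⟨n - (2*M+2), by omega⟩
      have h1 := (mainR M s).1
      have hcval : c (2*M+2+s) = ((s:ℝ)+1)/((2*M+2+s : ℕ):ℝ) := by
        rw [hcdef]
        simp only
        congr 1
        push_cast
        ring
      have hnpos : (0:ℝ) < ((2*M+2+s : ℕ):ℝ) := by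
        positivity
      have h3 : (((s:ℝ)+1) * a M) * (1/((2*M+2+s : ℕ):ℝ))
          ≤ (v (2*M+2+s) + ((s:ℝ)+1) * e M) * (1/((2*M+2+s : ℕ):ℝ)) :=
        mul_le_mul_of_nonneg_right h1 (by positivity)
      calc a M * c (2*M+2+s) = (((s:ℝ)+1) * a M) * (1/((2*M+2+s : ℕ):ℝ)) := by
            rw [hcval]; ring
        _ ≤ (v (2*M+2+s) + ((s:ℝ)+1) * e M) * (1/((2*M+2+s : ℕ):ℝ)) := h3
        _ = v (2*M+2+s) / ((2*M+2+s : ℕ):ℝ) + e M * c (2*M+2+s) := by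
            rw [hcval]; ring
    have hL : Tendsto (fun n : ℕ => a M * c n) atTop (nhds (a M * 1)) :=
      tendsto_const_nhds.mul hc
    have hR : Tendsto (fun n : ℕ => v n / n + e M * c n) atTop (nhds (d + e M * 1)) :=
      hv_lim.add (tendsto_const_nhds.mul hc)
    have := le_of_tendsto_of_tendsto hL hR hle
    simpa using this
  have key2 : ∀ M, d ≤ a M + 2 * e M := by
    intro M
    set c : ℕ → ℝ := fun n => ((n:ℝ) - (2*(M:ℝ)+1))/(n:ℝ) with hcdef
    have hc : Tendsto c atTop (nhds 1) := by
      have h0 : Tendsto (fun n : ℕ => 1 - (2*(M:ℝ)+1)/(n:ℝ)) atTop (nhds (1 - 0)) :=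
        tendsto_const_nhds.sub (tendsto_const_div_atTop_nhds_zero_nat _)
      rw [sub_zero] at h0
      refine h0.congr' ?_
      filter_upwards [eventually_ge_atTop 1] with n hn
      have hn0 : (n:ℝ) ≠ 0 := Nat.cast_ne_zero.2 (by omega)
      rw [hcdef]
      simp only
      rw [sub_div, div_self hn0]
    have hle : ∀ᶠ n : ℕ in atTop, v n / n
        ≤ a M * c n + e M * c n + e M + ((4*M+4 : ℕ):ℝ) * Vφ.toReal * (1/(n:ℝ)) := by
      filter_upwards [eventually_ge_atTop (2*M+2)] with n hn
      obtain ⟨s, rfl⟩ : ∃ s, n = 2*M+2+s := ⟨n - (2*M+2), by omega⟩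
      have h2 := (mainR M s).2
      have hcval : c (2*M+2+s) = ((s:ℝ)+1)/((2*M+2+s : ℕ):ℝ) := by
        rw [hcdef]
        simp only
        congr 1
        push_cast
        ring
      have hnpos : (0:ℝ) < ((2*M+2+s : ℕ):ℝ) := by positivity
      have hnne : ((2*M+2+s : ℕ):ℝ) ≠ 0 := hnpos.ne'
      have h3 : v (2*M+2+s) * (1/((2*M+2+s : ℕ):ℝ))
          ≤ (((s:ℝ)+1) * a M + ((s:ℝ)+1) * e M + ((2*M+2+s : ℕ) : ℝ) * e M
            + ((4*M+4 : ℕ) : ℝ) * Vφ.toReal) * (1/((2*M+2+s : ℕ):ℝ)) :=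
        mul_le_mul_of_nonneg_right h2 (by positivity)
      calc v (2*M+2+s) / ((2*M+2+s : ℕ):ℝ) = v (2*M+2+s) * (1/((2*M+2+s : ℕ):ℝ)) := by
            ring
        _ ≤ (((s:ℝ)+1) * a M + ((s:ℝ)+1) * e M + ((2*M+2+s : ℕ) : ℝ) * e M
            + ((4*M+4 : ℕ) : ℝ) * Vφ.toReal) * (1/((2*M+2+s : ℕ):ℝ)) := h3
        _ = a M * c (2*M+2+s) + e M * c (2*M+2+s)
            + ((2*M+2+s : ℕ) : ℝ) * (1/((2*M+2+s : ℕ):ℝ)) * e M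
            + ((4*M+4 : ℕ):ℝ) * Vφ.toReal * (1/((2*M+2+s : ℕ):ℝ)) := by
            rw [hcval]; ring
        _ = a M * c (2*M+2+s) + e M * c (2*M+2+s) + e M
            + ((4*M+4 : ℕ):ℝ) * Vφ.toReal * (1/((2*M+2+s : ℕ):ℝ)) := by
            rw [mul_one_div, div_self hnne, one_mul]
    have hR : Tendsto (fun n : ℕ => a M * c n + e M * c n + e M
        + ((4*M+4 : ℕ):ℝ) * Vφ.toReal * (1/(n:ℝ))) atTop
        (nhds (a M * 1 + e M * 1 + e M + ((4*M+4 : ℕ):ℝ) * Vφ.toReal * 0)) := by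
      refine (((tendsto_const_nhds.mul hc).add (tendsto_const_nhds.mul hc)).add
        tendsto_const_nhds).add (tendsto_const_nhds.mul ?_)
      exact tendsto_one_div_atTop_nhds_zero_nat
    have := le_of_tendsto_of_tendsto hv_lim hR hle
    have h4 : a M * 1 + e M * 1 + e M + ((4*M+4 : ℕ):ℝ) * Vφ.toReal * 0
        = a M + 2 * e M := by ring
    rwa [h4] at this
  -- the tails tend to zero
  have qlim : Tendsto q atTop (nhds 0) := by
    have hq_bdd : BddBelow (range q) := ⟨0, by rintro _ ⟨N, rfl⟩; exact (qIcc N).1⟩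
    have hqlim0 := tendsto_atTop_ciInf qanti hq_bdd
    set L := ⨅ N, q N with hLdef
    have hL0 : 0 ≤ L := le_ciInf fun N => (qIcc N).1
    have hLp : L ≤ p := by
      have := ciInf_le hq_bdd 0
      simpa [hqdef] using this
    have hLfix : g L = L := by
      have h1 : Tendsto (fun N => q (N+1)) atTop (nhds L) :=
        hqlim0.comp (tendsto_add_atTop_nat 1)
      have h2 : Tendsto (fun N => g (q N)) atTop (nhds (g L)) :=
        (hgd.continuous.tendsto L).comp hqlim0
      have h3 : (fun N => q (N+1)) = fun N => g (q N) := funext qsucc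
      rw [h3] at h1
      exact tendsto_nhds_unique h2 h1
    have hLzero : L = 0 := by
      by_contra hne
      have hLpos : 0 < L := lt_of_le_of_ne hL0 (Ne.symm hne)
      have hLIoo : L ∈ Ioo (0:ℝ) 1 := ⟨hLpos, lt_of_le_of_lt hLp hp.2⟩
      have := hmove L hLIoo
      have hfL : f L = L := by
        have := hfg L (Ioo_subset_Icc_self hLIoo)
        rwa [hLfix] at this
      rw [hfL] at this
      exact lt_irrefl L this
    rwa [hLzero] at hqlim0
  have rlim : Tendsto r atTop (nhds 1) := by
    have hr_bdd : BddAbove (range r) := ⟨1, by rintro _ ⟨N, rfl⟩; exact (rIcc N).2⟩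
    have hrlim0 := tendsto_atTop_ciSup rmono hr_bdd
    set L := ⨆ N, r N with hLdef
    have hL1 : L ≤ 1 := ciSup_le fun N => (rIcc N).2
    have hLp : p ≤ L := by
      have := le_ciSup hr_bdd 0
      simpa [hrdef] using this
    have hLfix : f L = L := by
      have h1 : Tendsto (fun N => r (N+1)) atTop (nhds L) :=
        hrlim0.comp (tendsto_add_atTop_nat 1)
      have h2 : Tendsto (fun N => f (r N)) atTop (nhds (f L)) :=
        (hfd.continuous.tendsto L).comp hrlim0
      have h3 : (fun N => r (N+1)) = fun N => f (r N) := funext rsucc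
      rw [h3] at h1
      exact tendsto_nhds_unique h2 h1
    have hLone : L = 1 := by
      by_contra hne
      have hLlt : L < 1 := lt_of_le_of_ne hL1 hne
      have hLIoo : L ∈ Ioo (0:ℝ) 1 := ⟨lt_of_lt_of_le hp.1 hLp, hLlt⟩
      have := hmove L hLIoo
      rw [hLfix] at this
      exact lt_irrefl L this
    rwa [hLone] at hrlim0
  have hεL0 : Tendsto (fun N => εL N) atTop (nhds 0) := by
    rw [ENNReal.tendsto_nhds_zero]
    intro ε hε
    obtain ⟨t, ht0, ht1, hvar⟩ := tail_small zero_lt_one hVφ (derivLim0 hfd hposf hbv) hε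
    have hev : ∀ᶠ N in atTop, q N < t := (tendsto_order.1 qlim).2 t ht0
    filter_upwards [hev] with N hN
    exact le_trans (eVariationOn.mono φ (Icc_subset_Icc le_rfl hN.le)) hvar
  have hεR0 : Tendsto (fun N => εR N) atTop (nhds 0) := by
    rw [ENNReal.tendsto_nhds_zero]
    intro ε hε
    have hanti : ∀ u w : ℝ, AntitoneOn (fun x : ℝ => 1 - x) (Icc u w) :=
      fun u w x _ y _ hxy => by simp only; linarith
    have himg : ∀ u w : ℝ, (fun x : ℝ => 1 - x) '' Icc u w = Icc (1-w) (1-u) := by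
      intro u w
      rw [image_const_sub_Icc]
    have hψbv : eVariationOn (fun x => φ (1 - x)) (Icc (0:ℝ) 1) ≠ ⊤ := by
      have h1 := eVariationOn.comp_eq_of_antitoneOn φ (fun x : ℝ => 1 - x) (hanti 0 1)
      rw [himg 0 1] at h1
      norm_num at h1
      rw [show (fun x => φ (1 - x)) = (φ ∘ fun x : ℝ => 1 - x) from rfl, h1]
      exact hVφ
    have hψcont : Tendsto (fun x => φ (1 - x)) (nhdsWithin 0 (Ioi 0))
        (nhds ((fun x => φ (1 - x)) 0)) := by
      have hρt : Tendsto (fun x : ℝ => 1 - x) (nhdsWithin 0 (Ioi 0))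
          (nhdsWithin 1 (Iio 1)) := by
        rw [tendsto_nhdsWithin_iff]
        constructor
        · have hcont1 : Continuous (fun x : ℝ => 1 - x) := continuous_const.sub continuous_id
          have h1 : Tendsto (fun x : ℝ => 1 - x) (nhds 0) (nhds ((fun x : ℝ => 1 - x) 0)) :=
            hcont1.tendsto 0
          have h2 := h1.mono_left (nhdsWithin_le_nhds (s := Ioi (0:ℝ)))
          simpa using h2
        · filter_upwards [self_mem_nhdsWithin] with x hx
          simp only [mem_Iio]
          have : (0:ℝ) < x := hx
          linarith
      have := (derivLim1 hfd hposf hbv).comp hρt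
      have h01 : (fun x => φ (1 - x)) 0 = φ 1 := by norm_num
      rw [h01]
      exact this
    obtain ⟨t, ht0, ht1, hvar⟩ := tail_small zero_lt_one hψbv hψcont hε
    have heq : eVariationOn (fun x => φ (1 - x)) (Icc 0 t) = eVariationOn φ (Icc (1-t) 1) := by
      have h1 := eVariationOn.comp_eq_of_antitoneOn φ (fun x : ℝ => 1 - x) (hanti 0 t)
      rw [himg 0 t] at h1
      norm_num at h1
      rw [show (fun x => φ (1 - x)) = (φ ∘ fun x : ℝ => 1 - x) from rfl, h1]
    have hev : ∀ᶠ N in atTop, 1 - t < r N := (tendsto_order.1 rlim).1 (1-t) (by linarith)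
    filter_upwards [hev] with N hN
    calc εR N ≤ eVariationOn φ (Icc (1-t) 1) :=
          eVariationOn.mono φ (Icc_subset_Icc hN.le le_rfl)
      _ ≤ ε := heq ▸ hvar
  have hεsum0 : Tendsto (fun M => εL (M+1) + εR (M+1)) atTop (nhds 0) := by
    rw [ENNReal.tendsto_nhds_zero]
    intro ε hε
    have hε2 : 0 < ε / 2 := ENNReal.div_pos hε.ne' (by norm_num)
    have h1 : ∀ᶠ N in atTop, εL N ≤ ε/2 := (ENNReal.tendsto_nhds_zero.1 hεL0) _ hε2
    have h2 : ∀ᶠ N in atTop, εR N ≤ ε/2 := (ENNReal.tendsto_nhds_zero.1 hεR0) _ hε2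
    have h3 : ∀ᶠ M in atTop, εL (M+1) ≤ ε/2 := (tendsto_add_atTop_nat 1).eventually h1
    have h4 : ∀ᶠ M in atTop, εR (M+1) ≤ ε/2 := (tendsto_add_atTop_nat 1).eventually h2
    filter_upwards [h3, h4] with M hM1 hM2
    calc εL (M+1) + εR (M+1) ≤ ε/2 + ε/2 := add_le_add hM1 hM2
      _ = ε := ENNReal.add_halves ε
  have he_lim : Tendsto e atTop (nhds 0) := by
    have h1 : Tendsto (fun M => (εL (M+1) + εR (M+1)).toReal) atTop (nhds ((0:ℝ≥0∞)).toReal) :=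
      (ENNReal.tendsto_toReal (by simp)).comp hεsum0
    simpa [hedef] using h1
  -- conclude by squeezing
  have hgoal_eq : ∀ M : ℕ, varLogDOn (f^[2 * (M+1)]) (Icc (g^[M+1] p) (g^[(M+1) - 1] p))
      = a M := by
    intro M
    have h2 : 2 * (M+1) = 2*M+2 := by ring
    rw [h2, varLogDOn,
      hVar_eq (2*M+2) (Icc (g^[M+1] p) (g^[M+1-1] p))
        (Icc_subset_Icc (qIcc (M+1)).1 (qIcc (M+1-1)).2)]
    rfl
  -- final squeeze
  have hlo : Tendsto (fun N : ℕ => d - 2 * e (N-1)) atTop (nhds d) := by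
    have h1 : Tendsto (fun N : ℕ => e (N-1)) atTop (nhds 0) :=
      he_lim.comp (tendsto_sub_atTop_nat 1)
    have h2 : Tendsto (fun N : ℕ => d - 2 * e (N-1)) atTop (nhds (d - 2 * 0)) :=
      tendsto_const_nhds.sub (tendsto_const_nhds.mul h1)
    simpa using h2
  have hhi : Tendsto (fun N : ℕ => d + 2 * e (N-1)) atTop (nhds d) := by
    have h1 : Tendsto (fun N : ℕ => e (N-1)) atTop (nhds 0) :=
      he_lim.comp (tendsto_sub_atTop_nat 1)
    have h2 : Tendsto (fun N : ℕ => d + 2 * e (N-1)) atTop (nhds (d + 2 * 0)) :=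
      tendsto_const_nhds.add (tendsto_const_nhds.mul h1)
    simpa using h2
  refine tendsto_of_tendsto_of_tendsto_of_le_of_le' hlo hhi ?_ ?_
  · filter_upwards [eventually_ge_atTop 1] with N hN
    obtain ⟨M, rfl⟩ : ∃ M, N = M+1 := ⟨N-1, by omega⟩
    have h1 := hgoal_eq M
    have h2 : (M+1) - 1 = M := by omega
    rw [h2] at h1 ⊢
    rw [h1]
    have := key2 M
    have := e_nonneg M
    linarith
  · filter_upwards [eventually_ge_atTop 1] with N hN
    obtain ⟨M, rfl⟩ : ∃ M, N = M+1 := ⟨N-1, by omega⟩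
    have h1 := hgoal_eq M
    have h2 : (M+1) - 1 = M := by omega
    rw [h2] at h1 ⊢
    rw [h1]
    have := key1 M
    have := e_nonneg M
    linarith
end

section
/- Let f be an orientation-preserving C¹ diffeomorphism of [0,1] tangent to the identity at both endpoints (Df(0)=Df(1)=1), fixing only 0 and 1 in case it is fixed-point free in the interior, and let g be a C¹ diffeomorphism of [0,1] commuting with f. Then Dg(0) = Dg(1) = 1, and if g has a fixed point a ∈ (0,1) then moreover Dg(a) = 1. -/
open Set Filter Topology

private lemma refl_deriv (F : ℝ → ℝ) (hF : Differentiable ℝ F) (x : ℝ) :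
    deriv (fun y => 1 - F (1 - y)) x = deriv F (1 - x) := by
  have h1 : HasDerivAt (fun y : ℝ => 1 - y) (-1) x := (hasDerivAt_id x).const_sub 1
  have h2 : HasDerivAt F (deriv F (1 - x)) (1 - x) := (hF (1 - x)).hasDerivAt
  have h3 := h2.comp x h1
  have h4 : HasDerivAt (fun y => 1 - F (1 - y)) (-(deriv F (1 - x) * (-1))) x :=
    h3.const_sub 1
  rw [h4.deriv]; ring

private lemma deriv_eq_of_seq {h φ : ℝ → ℝ} {c : ℝ} (hh : DifferentiableAt ℝ h c)
    (hφ : DifferentiableAt ℝ φ c) {u : ℕ → ℝ} (hu : Tendsto u atTop (𝓝 c))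
    (hne : ∀ n, u n ≠ c) (heq : ∀ n, h (u n) = φ (u n)) (hc : h c = φ c) :
    deriv h c = deriv φ c := by
  have hu' : Tendsto u atTop (𝓝[≠] c) :=
    tendsto_nhdsWithin_of_tendsto_nhds_of_eventually_within u hu (Eventually.of_forall hne)
  have t1 := (hasDerivAt_iff_tendsto_slope.1 hh.hasDerivAt).comp hu'
  have t2 := (hasDerivAt_iff_tendsto_slope.1 hφ.hasDerivAt).comp hu'
  have e : (slope h c ∘ u) = (slope φ c ∘ u) := by
    funext n
    simp only [Function.comp_apply, slope_def_field, heq n, hc]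
  rw [e] at t1
  exact tendsto_nhds_unique t1 t2

private lemma tendsto_orbit {f : ℝ → ℝ} (hfc : Continuous f)
    (hmaps : MapsTo f (Ioo 0 1) (Ioo 0 1)) (hlt : ∀ x ∈ Ioo (0:ℝ) 1, x < f x)
    {a : ℝ} (ha : a ∈ Ioo (0:ℝ) 1) : Tendsto (fun n => f^[n] a) atTop (𝓝 1) := by
  set u : ℕ → ℝ := fun n => f^[n] a with hu
  have hmem : ∀ n, u n ∈ Ioo (0:ℝ) 1 := fun n => hmaps.iterate n ha
  have hmono : Monotone u := by
    apply monotone_nat_of_le_succ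
    intro n
    have : u (n+1) = f (u n) := Function.iterate_succ_apply' f n a
    rw [this]
    exact (hlt _ (hmem n)).le
  have hbdd : BddAbove (Set.range u) := ⟨1, by rintro x ⟨n, rfl⟩; exact (hmem n).2.le⟩
  have htend : Tendsto u atTop (𝓝 (⨆ n, u n)) := tendsto_atTop_ciSup hmono hbdd
  set L := ⨆ n, u n with hL
  have hL1 : L ≤ 1 := ciSup_le fun n => (hmem n).2.le
  have hL0 : 0 < L := lt_of_lt_of_le (hmem 0).1 (le_ciSup hbdd 0)
  have hfix : f L = L := by
    have t1 : Tendsto (fun n => u (n+1)) atTop (𝓝 L) := htend.comp (tendsto_add_atTop_nat 1)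
    have t2 : Tendsto (fun n => f (u n)) atTop (𝓝 (f L)) := (hfc.tendsto L).comp htend
    have e : (fun n => u (n+1)) = fun n => f (u n) := by
      funext n; exact Function.iterate_succ_apply' f n a
    rw [e] at t1
    exact (tendsto_nhds_unique t2 t1)
  have : L = 1 := by
    rcases lt_or_eq_of_le hL1 with h | h
    · exact absurd hfix (ne_of_gt (hlt L ⟨hL0, h⟩))
    · exact h
  rwa [this] at htend

private lemma tendsto_back {f : ℝ → ℝ} (hfc : Continuous f)
    (hlt : ∀ x ∈ Ioo (0:ℝ) 1, x < f x)
    {b : ℕ → ℝ} (hmem : ∀ n, b n ∈ Ioo (0:ℝ) 1) (hstep : ∀ n, f (b (n+1)) = b n) :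
    Tendsto b atTop (𝓝 0) := by
  have hanti : Antitone b := by
    apply antitone_nat_of_succ_le
    intro n
    calc b (n+1) ≤ f (b (n+1)) := (hlt _ (hmem (n+1))).le
    _ = b n := hstep n
  have hbdd : BddBelow (Set.range b) := ⟨0, by rintro x ⟨n, rfl⟩; exact (hmem n).1.le⟩
  have htend : Tendsto b atTop (𝓝 (⨅ n, b n)) := tendsto_atTop_ciInf hanti hbdd
  set L := ⨅ n, b n with hL
  have hL0 : 0 ≤ L := le_ciInf fun n => (hmem n).1.le
  have hL1 : L < 1 := lt_of_le_of_lt (ciInf_le hbdd 0) (hmem 0).2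
  have hfix : f L = L := by
    have t1 : Tendsto (fun n => b (n+1)) atTop (𝓝 L) := htend.comp (tendsto_add_atTop_nat 1)
    have t2 : Tendsto (fun n => f (b (n+1))) atTop (𝓝 (f L)) := (hfc.tendsto L).comp t1
    have e : (fun n => f (b (n+1))) = fun n => b n := funext hstep
    rw [e] at t2
    exact tendsto_nhds_unique t2 htend
  have : L = 0 := by
    rcases eq_or_lt_of_le hL0 with h | h
    · exact h.symm
    · exact absurd hfix (ne_of_gt (hlt L ⟨h, hL1⟩))
  rwa [this] at htend

private lemma hasDerivAt_iterate {f : ℝ → ℝ} (hfd : Differentiable ℝ f) (n : ℕ) (a : ℝ) :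
    HasDerivAt (f^[n]) (∏ i ∈ Finset.range n, deriv f (f^[i] a)) a := by
  induction n with
  | zero => simpa using hasDerivAt_id a
  | succ n ih =>
    have h1 : HasDerivAt f (deriv f (f^[n] a)) (f^[n] a) := (hfd _).hasDerivAt
    have h2 := h1.comp a ih
    rw [Finset.prod_range_succ, mul_comm]
    have e : f^[n+1] = f ∘ f^[n] := Function.iterate_succ' f n
    rw [e]
    exact h2

private lemma endpoint_derivs {f h φ : ℝ → ℝ}
    (hfc : Continuous f) (hf0 : f 0 = 0) (hf1 : f 1 = 1)
    (hfinj : InjOn f (Icc 0 1)) (hfIoo : MapsTo f (Ioo 0 1) (Ioo 0 1))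
    (hlt : ∀ x ∈ Ioo (0:ℝ) 1, x < f x)
    (hhd : Differentiable ℝ h) (hφd : Differentiable ℝ φ)
    (hcommh : ∀ x ∈ Icc (0:ℝ) 1, h (f x) = f (h x))
    (hcommφ : ∀ x ∈ Icc (0:ℝ) 1, φ (f x) = f (φ x))
    (hhIoo : MapsTo h (Ioo 0 1) (Ioo 0 1)) (hφIoo : MapsTo φ (Ioo 0 1) (Ioo 0 1))
    (hh0 : h 0 = φ 0) (hh1 : h 1 = φ 1)
    {a : ℝ} (ha : a ∈ Ioo (0:ℝ) 1) (heq : h a = φ a) :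
    deriv h 0 = deriv φ 0 ∧ deriv h 1 = deriv φ 1 := by
  constructor
  · -- backward orbit
    have hpre : ∀ y ∈ Ioo (0:ℝ) 1, ∃ x, x ∈ Ioo (0:ℝ) 1 ∧ f x = y := by
      intro y hy
      have hsub : Ioo (f 0) (f 1) ⊆ f '' (Ioo 0 1) :=
        intermediate_value_Ioo (by norm_num) hfc.continuousOn
      rw [hf0, hf1] at hsub
      obtain ⟨x, hx, hfx⟩ := hsub hy
      exact ⟨x, hx, hfx⟩
    choose F hFmem hFfix using hpre
    let P : {x : ℝ // x ∈ Ioo (0:ℝ) 1} → {x : ℝ // x ∈ Ioo (0:ℝ) 1} :=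
      fun y => ⟨F y.1 y.2, hFmem y.1 y.2⟩
    set b : ℕ → ℝ := fun n => (P^[n] ⟨a, ha⟩ : {x : ℝ // x ∈ Ioo (0:ℝ) 1}).1 with hb
    have hbmem : ∀ n, b n ∈ Ioo (0:ℝ) 1 := fun n => (P^[n] ⟨a, ha⟩).2
    have hbstep : ∀ n, f (b (n+1)) = b n := by
      intro n
      have e : P^[n+1] ⟨a, ha⟩ = P (P^[n] ⟨a, ha⟩) := Function.iterate_succ_apply' P n _
      show f (P^[n+1] ⟨a, ha⟩ : _).1 = _
      rw [e]
      exact hFfix _ _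
    have hb0 : b 0 = a := rfl
    have hbeq : ∀ n, h (b n) = φ (b n) := by
      intro n
      induction n with
      | zero => rw [hb0]; exact heq
      | succ n ih =>
        have h1 : h (f (b (n+1))) = f (h (b (n+1))) :=
          hcommh _ (Ioo_subset_Icc_self (hbmem (n+1)))
        have h2 : φ (f (b (n+1))) = f (φ (b (n+1))) :=
          hcommφ _ (Ioo_subset_Icc_self (hbmem (n+1)))
        rw [hbstep n] at h1 h2
        have h3 : f (h (b (n+1))) = f (φ (b (n+1))) := by rw [← h1, ← h2, ih]
        exact hfinj (Ioo_subset_Icc_self (hhIoo (hbmem (n+1))))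
          (Ioo_subset_Icc_self (hφIoo (hbmem (n+1)))) h3
    have htend : Tendsto b atTop (𝓝 0) := tendsto_back hfc hlt hbmem hbstep
    exact deriv_eq_of_seq (hhd 0) (hφd 0) htend (fun n => ne_of_gt (hbmem n).1) hbeq hh0
  · -- forward orbit
    set u : ℕ → ℝ := fun n => f^[n] a with hu
    have humem : ∀ n, u n ∈ Ioo (0:ℝ) 1 := fun n => hfIoo.iterate n ha
    have hueq : ∀ n, h (u n) = φ (u n) := by
      intro n
      induction n with
      | zero => exact heq
      | succ n ih =>
        have e : u (n+1) = f (u n) := Function.iterate_succ_apply' f n a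
        rw [e, hcommh _ (Ioo_subset_Icc_self (humem n)),
          hcommφ _ (Ioo_subset_Icc_self (humem n)), ih]
    have htend : Tendsto u atTop (𝓝 1) := tendsto_orbit hfc hfIoo hlt ha
    exact deriv_eq_of_seq (hhd 1) (hφd 1) htend (fun n => ne_of_lt (humem n).2) hueq hh1

private lemma key (f g : ℝ → ℝ)
    (hfd : Differentiable ℝ f) (hgd : Differentiable ℝ g)
    (hf0 : f 0 = 0) (hf1 : f 1 = 1) (hg0 : g 0 = 0) (hg1 : g 1 = 1)
    (hposf : ∀ x ∈ Icc (0 : ℝ) 1, 0 < deriv f x)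
    (hposg : ∀ x ∈ Icc (0 : ℝ) 1, 0 < deriv g x)
    (hcontg : Continuous (deriv g))
    (hD0 : deriv f 0 = 1) (hD1 : deriv f 1 = 1)
    (hlt : ∀ x ∈ Ioo (0:ℝ) 1, x < f x)
    (hcomm : ∀ x ∈ Icc (0 : ℝ) 1, g (f x) = f (g x)) :
    deriv g 0 = 1 ∧ deriv g 1 = 1 ∧
      ∀ a ∈ Ioo (0 : ℝ) 1, g a = a → deriv g a = 1 := by
  have hfc : Continuous f := hfd.continuous
  have hgc : Continuous g := hgd.continuous
  have hfmono : StrictMonoOn f (Icc 0 1) :=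
    strictMonoOn_of_deriv_pos (convex_Icc 0 1) hfc.continuousOn
      (fun x hx => hposf x (interior_subset hx))
  have hgmono : StrictMonoOn g (Icc 0 1) :=
    strictMonoOn_of_deriv_pos (convex_Icc 0 1) hgc.continuousOn
      (fun x hx => hposg x (interior_subset hx))
  have hfIcc : MapsTo f (Icc 0 1) (Icc 0 1) := by
    intro x hx
    constructor
    · rw [← hf0]; exact hfmono.monotoneOn ⟨le_refl 0, zero_le_one⟩ hx hx.1
    · rw [← hf1]; exact hfmono.monotoneOn hx ⟨zero_le_one, le_refl 1⟩ hx.2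
  have hfIoo : MapsTo f (Ioo 0 1) (Ioo 0 1) := by
    intro x hx
    constructor
    · rw [← hf0]; exact hfmono ⟨le_refl 0, zero_le_one⟩ (Ioo_subset_Icc_self hx) hx.1
    · rw [← hf1]; exact hfmono (Ioo_subset_Icc_self hx) ⟨zero_le_one, le_refl 1⟩ hx.2
  have hgIoo : MapsTo g (Ioo 0 1) (Ioo 0 1) := by
    intro x hx
    constructor
    · rw [← hg0]; exact hgmono ⟨le_refl 0, zero_le_one⟩ (Ioo_subset_Icc_self hx) hx.1
    · rw [← hg1]; exact hgmono (Ioo_subset_Icc_self hx) ⟨zero_le_one, le_refl 1⟩ hx.2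
  have Dfn := hasDerivAt_iterate hfd
  have prod0 : ∀ n : ℕ, (∏ i ∈ Finset.range n, deriv f (f^[i] 0)) = 1 := by
    intro n
    have : ∀ i : ℕ, f^[i] (0:ℝ) = 0 := fun i => Function.iterate_fixed hf0 i
    simp [this, hD0]
  have prod1 : ∀ n : ℕ, (∏ i ∈ Finset.range n, deriv f (f^[i] 1)) = 1 := by
    intro n
    have : ∀ i : ℕ, f^[i] (1:ℝ) = 1 := fun i => Function.iterate_fixed hf1 i
    simp [this, hD1]
  have Dfn0 : ∀ n : ℕ, HasDerivAt (f^[n]) 1 0 := by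
    intro n; have := Dfn n 0; rwa [prod0 n] at this
  have Dfn1 : ∀ n : ℕ, HasDerivAt (f^[n]) 1 1 := by
    intro n; have := Dfn n 1; rwa [prod1 n] at this
  have hcommn : ∀ (n : ℕ), ∀ x ∈ Icc (0:ℝ) 1, g (f^[n] x) = f^[n] (g x) := by
    intro n
    induction n with
    | zero => intro x _; simp
    | succ n ih =>
      intro x hx
      rw [Function.iterate_succ_apply' f n x, Function.iterate_succ_apply' f n (g x),
        hcomm _ (hfIcc.iterate n hx), ih x hx]
  have hx0 : (1/2 : ℝ) ∈ Ioo (0:ℝ) 1 := by norm_num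
  -- choose k
  obtain ⟨k, hk⟩ : ∃ k, 1/2 < f^[k] (g (1/2)) :=
    ((tendsto_orbit hfc hfIoo hlt (hgIoo hx0)).eventually
      (eventually_gt_nhds (by norm_num : (1/2:ℝ) < 1))).exists
  have hymem : f^[k] (g (1/2)) ∈ Ioo (0:ℝ) 1 := (hfIoo.iterate k) (hgIoo hx0)
  -- choose j
  have hEx : ∃ m, f^[k] (g (1/2)) < f^[m] (1/2) :=
    ((tendsto_orbit hfc hfIoo hlt hx0).eventually (eventually_gt_nhds hymem.2)).exists
  have hm := Nat.find_spec hEx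
  have hm0 : Nat.find hEx ≠ 0 := by
    intro e
    rw [e] at hm
    simp only [Function.iterate_zero_apply] at hm
    linarith
  set j := Nat.find hEx - 1 with hjdef
  have hjsucc : j + 1 = Nat.find hEx := Nat.succ_pred_eq_of_pos (Nat.pos_of_ne_zero hm0)
  have hj1 : f^[j] (1/2) ≤ f^[k] (g (1/2)) :=
    not_lt.1 (Nat.find_min hEx (by omega))
  have hj2 : f^[k] (g (1/2)) < f^[j+1] (1/2) := by rw [hjsucc]; exact hm
  -- the candidate map h = f^[k] ∘ g
  set h : ℝ → ℝ := fun x => f^[k] (g x) with hhdef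
  have hhd : Differentiable ℝ h := (hfd.iterate k).comp hgd
  have hh0 : h 0 = 0 := by rw [hhdef]; simp [hg0, Function.iterate_fixed hf0]
  have hh1 : h 1 = 1 := by rw [hhdef]; simp [hg1, Function.iterate_fixed hf1]
  have hhcomm : ∀ x ∈ Icc (0:ℝ) 1, h (f x) = f (h x) := by
    intro x hx
    show f^[k] (g (f x)) = f (f^[k] (g x))
    rw [hcomm x hx, ← Function.iterate_succ_apply f k (g x),
      Function.iterate_succ_apply' f k (g x)]
  have hφcomm : ∀ (n : ℕ), ∀ x ∈ Icc (0:ℝ) 1, f^[n] (f x) = f (f^[n] x) := by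
    intro n x _
    rw [← Function.iterate_succ_apply f n x, Function.iterate_succ_apply' f n x]
  have hhIoo : MapsTo h (Ioo 0 1) (Ioo 0 1) := fun x hx => (hfIoo.iterate k) (hgIoo hx)
  have derivh0 : deriv h 0 = deriv g 0 := by
    have d1 : HasDerivAt (f^[k]) 1 (g 0) := by rw [hg0]; exact Dfn0 k
    have := (d1.comp 0 (hgd 0).hasDerivAt)
    rw [show h = f^[k] ∘ g from rfl, this.deriv, one_mul]
  have derivh1 : deriv h 1 = deriv g 1 := by
    have d1 : HasDerivAt (f^[k]) 1 (g 1) := by rw [hg1]; exact Dfn1 k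
    have := (d1.comp 1 (hgd 1).hasDerivAt)
    rw [show h = f^[k] ∘ g from rfl, this.deriv, one_mul]
  -- main claim on endpoints
  have H : deriv h 0 = 1 ∧ deriv h 1 = 1 := by
    by_cases hA : ∃ a ∈ Ioo (0:ℝ) 1, h a = f^[j] a
    · obtain ⟨a, ha, heq⟩ := hA
      have E := endpoint_derivs hfc hf0 hf1 hfmono.injOn hfIoo hlt hhd (hfd.iterate j)
        hhcomm (hφcomm j) hhIoo (hfIoo.iterate j) (by rw [hh0, Function.iterate_fixed hf0])
        (by rw [hh1, Function.iterate_fixed hf1]) ha heq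
      rw [E.1, E.2, (Dfn0 j).deriv, (Dfn1 j).deriv]
      exact ⟨rfl, rfl⟩
    by_cases hB : ∃ a ∈ Ioo (0:ℝ) 1, h a = f^[j+1] a
    · obtain ⟨a, ha, heq⟩ := hB
      have E := endpoint_derivs hfc hf0 hf1 hfmono.injOn hfIoo hlt hhd (hfd.iterate (j+1))
        hhcomm (hφcomm (j+1)) hhIoo (hfIoo.iterate (j+1))
        (by rw [hh0, Function.iterate_fixed hf0])
        (by rw [hh1, Function.iterate_fixed hf1]) ha heq
      rw [E.1, E.2, (Dfn0 (j+1)).deriv, (Dfn1 (j+1)).deriv]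
      exact ⟨rfl, rfl⟩
    -- no coincidence: squeeze
    have hsand : ∀ n : ℕ, ((¬ ∃ a ∈ Ioo (0:ℝ) 1, h a = f^[n] a) → 0 ≤ h (1/2) - f^[n] (1/2) →
        ∀ x ∈ Ioo (0:ℝ) 1, f^[n] x < h x) ∧
        ((¬ ∃ a ∈ Ioo (0:ℝ) 1, h a = f^[n] a) → h (1/2) - f^[n] (1/2) ≤ 0 →
        ∀ x ∈ Ioo (0:ℝ) 1, h x < f^[n] x) := by
      intro n
      have hcont : Continuous (fun x => h x - f^[n] x) :=
        hhd.continuous.sub (hfc.iterate n)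
      constructor
      · intro hno hge x hx
        by_contra hcon
        push_neg at hcon
        have hne : h x ≠ f^[n] x := fun e => hno ⟨x, hx, e⟩
        have hlt' : h x - f^[n] x < 0 := sub_neg.2 (lt_of_le_of_ne hcon hne)
        have hIVT := intermediate_value_uIcc (a := x) (b := (1/2:ℝ)) hcont.continuousOn
        have h0mem : (0:ℝ) ∈ uIcc (h x - f^[n] x) (h (1/2) - f^[n] (1/2)) := by
          rw [mem_uIcc]; left; exact ⟨hlt'.le, hge⟩
        obtain ⟨c, hc, hc0⟩ := hIVT h0mem
        have hcIoo : c ∈ Ioo (0:ℝ) 1 := by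
          rcases mem_uIcc.1 hc with hc' | hc'
          · exact ⟨lt_of_lt_of_le hx.1 hc'.1, lt_of_le_of_lt hc'.2 hx0.2⟩
          · exact ⟨lt_of_lt_of_le hx0.1 hc'.1, lt_of_le_of_lt hc'.2 hx.2⟩
        exact hno ⟨c, hcIoo, sub_eq_zero.1 hc0⟩
      · intro hno hle x hx
        by_contra hcon
        push_neg at hcon
        have hne : h x ≠ f^[n] x := fun e => hno ⟨x, hx, e⟩
        have hgt' : 0 < h x - f^[n] x := sub_pos.2 (lt_of_le_of_ne hcon (Ne.symm hne))
        have hcont : Continuous (fun x => h x - f^[n] x) :=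
          hhd.continuous.sub (hfc.iterate n)
        have hIVT := intermediate_value_uIcc (a := x) (b := (1/2:ℝ)) hcont.continuousOn
        have h0mem : (0:ℝ) ∈ uIcc (h x - f^[n] x) (h (1/2) - f^[n] (1/2)) := by
          rw [mem_uIcc]; right; exact ⟨hle, hgt'.le⟩
        obtain ⟨c, hc, hc0⟩ := hIVT h0mem
        have hcIoo : c ∈ Ioo (0:ℝ) 1 := by
          rcases mem_uIcc.1 hc with hc' | hc'
          · exact ⟨lt_of_lt_of_le hx.1 hc'.1, lt_of_le_of_lt hc'.2 hx0.2⟩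
          · exact ⟨lt_of_lt_of_le hx0.1 hc'.1, lt_of_le_of_lt hc'.2 hx.2⟩
        exact hno ⟨c, hcIoo, sub_eq_zero.1 hc0⟩
    have hP : ∀ x ∈ Ioo (0:ℝ) 1, f^[j] x < h x :=
      (hsand j).1 hA (by simpa using hj1)
    have hQ : ∀ x ∈ Ioo (0:ℝ) 1, h x < f^[j+1] x :=
      (hsand (j+1)).2 hB (by simpa using hj2.le)
    constructor
    · -- squeeze at 0
      have hsub0 : 𝓝[>] (0:ℝ) ≤ 𝓝[≠] (0:ℝ) :=
        nhdsWithin_mono 0 fun x hx => ne_of_gt hx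
      have Th : Tendsto (slope h 0) (𝓝[>] (0:ℝ)) (𝓝 (deriv h 0)) :=
        (hasDerivAt_iff_tendsto_slope.1 (hhd 0).hasDerivAt).mono_left hsub0
      have Tφ : Tendsto (slope (f^[j]) 0) (𝓝[>] (0:ℝ)) (𝓝 1) :=
        (hasDerivAt_iff_tendsto_slope.1 (Dfn0 j)).mono_left hsub0
      have Tψ : Tendsto (slope (f^[j+1]) 0) (𝓝[>] (0:ℝ)) (𝓝 1) :=
        (hasDerivAt_iff_tendsto_slope.1 (Dfn0 (j+1))).mono_left hsub0
      have hIoomem : Ioo (0:ℝ) 1 ∈ 𝓝[>] (0:ℝ) :=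
        Ioo_mem_nhdsGT_of_mem (by norm_num : (0:ℝ) ∈ Ico (0:ℝ) 1)
      have hle1 : ∀ᶠ x in 𝓝[>] (0:ℝ), slope (f^[j]) 0 x ≤ slope h 0 x := by
        filter_upwards [hIoomem] with x hx
        simp only [slope_def_field, hh0, Function.iterate_fixed hf0, sub_zero]
        exact div_le_div_of_nonneg_right (hP x hx).le hx.1.le
      have hle2 : ∀ᶠ x in 𝓝[>] (0:ℝ), slope h 0 x ≤ slope (f^[j+1]) 0 x := by
        filter_upwards [hIoomem] with x hx
        simp only [slope_def_field, hh0, Function.iterate_fixed hf0, sub_zero]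
        exact div_le_div_of_nonneg_right (hQ x hx).le hx.1.le
      have Th' : Tendsto (slope h 0) (𝓝[>] (0:ℝ)) (𝓝 1) :=
        tendsto_of_tendsto_of_tendsto_of_le_of_le' Tφ Tψ hle1 hle2
      exact tendsto_nhds_unique Th Th'
    · -- squeeze at 1
      have hsub1 : 𝓝[<] (1:ℝ) ≤ 𝓝[≠] (1:ℝ) :=
        nhdsWithin_mono 1 fun x hx => ne_of_lt hx
      have Th : Tendsto (slope h 1) (𝓝[<] (1:ℝ)) (𝓝 (deriv h 1)) :=
        (hasDerivAt_iff_tendsto_slope.1 (hhd 1).hasDerivAt).mono_left hsub1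
      have Tφ : Tendsto (slope (f^[j]) 1) (𝓝[<] (1:ℝ)) (𝓝 1) :=
        (hasDerivAt_iff_tendsto_slope.1 (Dfn1 j)).mono_left hsub1
      have Tψ : Tendsto (slope (f^[j+1]) 1) (𝓝[<] (1:ℝ)) (𝓝 1) :=
        (hasDerivAt_iff_tendsto_slope.1 (Dfn1 (j+1))).mono_left hsub1
      have hIoomem : Ioo (0:ℝ) 1 ∈ 𝓝[<] (1:ℝ) :=
        Ioo_mem_nhdsLT_of_mem (by norm_num : (1:ℝ) ∈ Ioc (0:ℝ) 1)
      have hle1 : ∀ᶠ x in 𝓝[<] (1:ℝ), slope (f^[j+1]) 1 x ≤ slope h 1 x := by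
        filter_upwards [hIoomem] with x hx
        simp only [slope_def_field, hh1, Function.iterate_fixed hf1]
        exact (div_le_div_right_of_neg (by linarith [hx.2])).2 (by linarith [hQ x hx])
      have hle2 : ∀ᶠ x in 𝓝[<] (1:ℝ), slope h 1 x ≤ slope (f^[j]) 1 x := by
        filter_upwards [hIoomem] with x hx
        simp only [slope_def_field, hh1, Function.iterate_fixed hf1]
        exact (div_le_div_right_of_neg (by linarith [hx.2])).2 (by linarith [hP x hx])
      have Th' : Tendsto (slope h 1) (𝓝[<] (1:ℝ)) (𝓝 1) :=
        tendsto_of_tendsto_of_tendsto_of_le_of_le' Tψ Tφ hle1 hle2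
      exact tendsto_nhds_unique Th Th'
  have Hg0 : deriv g 0 = 1 := by rw [← derivh0]; exact H.1
  have Hg1 : deriv g 1 = 1 := by rw [← derivh1]; exact H.2
  refine ⟨Hg0, Hg1, ?_⟩
  -- interior fixed point
  intro a ha hga
  have haIcc : a ∈ Icc (0:ℝ) 1 := Ioo_subset_Icc_self ha
  have hD : ∀ n : ℕ, deriv g (f^[n] a) = deriv g a := by
    intro n
    have e1 : (fun x => g (f^[n] x)) =ᶠ[𝓝 a] (fun x => f^[n] (g x)) :=
      eventually_of_mem (Icc_mem_nhds ha.1 ha.2) (hcommn n)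
    have d1 : HasDerivAt (fun x => g (f^[n] x))
        (deriv g (f^[n] a) * ∏ i ∈ Finset.range n, deriv f (f^[i] a)) a :=
      ((hgd _).hasDerivAt).comp a (Dfn n a)
    have d2 : HasDerivAt (fun x => f^[n] (g x))
        ((∏ i ∈ Finset.range n, deriv f (f^[i] a)) * deriv g a) a := by
      have := (Dfn n (g a)).comp a (hgd a).hasDerivAt
      rwa [hga] at this
    have ee := e1.deriv_eq
    rw [d1.deriv, d2.deriv] at ee
    have Dpos : (0:ℝ) < ∏ i ∈ Finset.range n, deriv f (f^[i] a) :=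
      Finset.prod_pos fun i _ => hposf _ (hfIcc.iterate i haIcc)
    have := ee.trans (mul_comm _ _)
    exact mul_right_cancel₀ (ne_of_gt Dpos) this
  have htend : Tendsto (fun n => f^[n] a) atTop (𝓝 1) := tendsto_orbit hfc hfIoo hlt ha
  have t1 : Tendsto (fun n => deriv g (f^[n] a)) atTop (𝓝 (deriv g 1)) :=
    (hcontg.tendsto 1).comp htend
  have t2 : Tendsto (fun n => deriv g (f^[n] a)) atTop (𝓝 (deriv g a)) := by
    have : (fun n : ℕ => deriv g (f^[n] a)) = fun _ => deriv g a := funext hD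
    rw [this]; exact tendsto_const_nhds
  rw [tendsto_nhds_unique t2 t1]
  exact Hg1

open Set

/-- If `f` is an orientation-preserving C¹ diffeomorphism of `[0,1]` tangent to the
identity at the endpoints and fixing only `0` and `1`, and `g` is an orientation-preserving
C¹ diffeomorphism of `[0,1]` commuting with `f`, then `Dg(0) = Dg(1) = 1`, and `Dg(a) = 1`
at any interior fixed point `a` of `g`. -/
theorem stmt_18 (f g : ℝ → ℝ)
    (hfd : Differentiable ℝ f) (hgd : Differentiable ℝ g)
    (hf0 : f 0 = 0) (hf1 : f 1 = 1) (hg0 : g 0 = 0) (hg1 : g 1 = 1)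
    (hmapsf : MapsTo f (Icc (0 : ℝ) 1) (Icc (0 : ℝ) 1))
    (hmapsg : MapsTo g (Icc (0 : ℝ) 1) (Icc (0 : ℝ) 1))
    (hposf : ∀ x ∈ Icc (0 : ℝ) 1, 0 < deriv f x)
    (hposg : ∀ x ∈ Icc (0 : ℝ) 1, 0 < deriv g x)
    (hcontf : Continuous (deriv f)) (hcontg : Continuous (deriv g))
    (hD0 : deriv f 0 = 1) (hD1 : deriv f 1 = 1)
    (hfix : ∀ x ∈ Ioo (0 : ℝ) 1, f x ≠ x)
    (hcomm : ∀ x ∈ Icc (0 : ℝ) 1, g (f x) = f (g x)) :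
    deriv g 0 = 1 ∧ deriv g 1 = 1 ∧
      ∀ a ∈ Ioo (0 : ℝ) 1, g a = a → deriv g a = 1 := by
  have hfc : Continuous f := hfd.continuous
  have hdich : (∀ x ∈ Ioo (0:ℝ) 1, x < f x) ∨ (∀ x ∈ Ioo (0:ℝ) 1, f x < x) := by
    by_cases hc : ∀ x ∈ Ioo (0:ℝ) 1, x < f x
    · left; exact hc
    · right
      push_neg at hc
      obtain ⟨x₁, hx₁, hle⟩ := hc
      have hlt1 : f x₁ < x₁ := lt_of_le_of_ne hle (hfix x₁ hx₁)
      intro x hx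
      rcases lt_trichotomy (f x) x with h | h | h
      · exact h
      · exact absurd h (hfix x hx)
      · exfalso
        have hcont : Continuous (fun y => f y - y) := hfc.sub continuous_id
        have hIVT := intermediate_value_uIcc (a := x) (b := x₁) hcont.continuousOn
        have h0mem : (0:ℝ) ∈ uIcc (f x - x) (f x₁ - x₁) := by
          rw [mem_uIcc]; right
          constructor <;> [linarith; linarith]
        obtain ⟨c, hc', hc0⟩ := hIVT h0mem
        have hcIoo : c ∈ Ioo (0:ℝ) 1 := by
          rcases mem_uIcc.1 hc' with h' | h'
          · exact ⟨lt_of_lt_of_le hx.1 h'.1, lt_of_le_of_lt h'.2 hx₁.2⟩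
          · exact ⟨lt_of_lt_of_le hx₁.1 h'.1, lt_of_le_of_lt h'.2 hx.2⟩
        exact hfix c hcIoo (by have := sub_eq_zero.1 hc0; linarith)
  rcases hdich with hlt | hgt
  · exact key f g hfd hgd hf0 hf1 hg0 hg1 hposf hposg hcontg hD0 hD1 hlt hcomm
  · set f2 : ℝ → ℝ := fun x => 1 - f (1 - x) with hf2def
    set g2 : ℝ → ℝ := fun x => 1 - g (1 - x) with hg2def
    have hsd : Differentiable ℝ (fun x : ℝ => 1 - x) :=
      (differentiable_const 1).sub differentiable_id
    have hfd2 : Differentiable ℝ f2 := (differentiable_const 1).sub (hfd.comp hsd)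
    have hgd2 : Differentiable ℝ g2 := (differentiable_const 1).sub (hgd.comp hsd)
    have hrf : ∀ x, deriv f2 x = deriv f (1 - x) := refl_deriv f hfd
    have hrg : ∀ x, deriv g2 x = deriv g (1 - x) := refl_deriv g hgd
    have hmem1 : ∀ x ∈ Icc (0:ℝ) 1, (1 - x) ∈ Icc (0:ℝ) 1 := by
      intro x hx
      exact ⟨by linarith [hx.2], by linarith [hx.1]⟩
    have hf20 : f2 0 = 0 := by show 1 - f (1 - 0) = 0; norm_num [hf1]
    have hf21 : f2 1 = 1 := by show 1 - f (1 - 1) = 1; norm_num [hf0]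
    have hg20 : g2 0 = 0 := by show 1 - g (1 - 0) = 0; norm_num [hg1]
    have hg21 : g2 1 = 1 := by show 1 - g (1 - 1) = 1; norm_num [hg0]
    have hposf2 : ∀ x ∈ Icc (0:ℝ) 1, 0 < deriv f2 x := by
      intro x hx; rw [hrf x]; exact hposf _ (hmem1 x hx)
    have hposg2 : ∀ x ∈ Icc (0:ℝ) 1, 0 < deriv g2 x := by
      intro x hx; rw [hrg x]; exact hposg _ (hmem1 x hx)
    have hcontg2 : Continuous (deriv g2) := by
      have e : deriv g2 = fun x => deriv g (1 - x) := funext hrg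
      rw [e]
      exact hcontg.comp (continuous_const.sub continuous_id)
    have hD02 : deriv f2 0 = 1 := by rw [hrf 0]; norm_num [hD1]
    have hD12 : deriv f2 1 = 1 := by rw [hrf 1]; norm_num [hD0]
    have hlt2 : ∀ x ∈ Ioo (0:ℝ) 1, x < f2 x := by
      intro x hx
      have h1x : (1 - x) ∈ Ioo (0:ℝ) 1 := ⟨by linarith [hx.2], by linarith [hx.1]⟩
      have := hgt _ h1x
      show x < 1 - f (1 - x)
      linarith
    have hcomm2 : ∀ x ∈ Icc (0:ℝ) 1, g2 (f2 x) = f2 (g2 x) := by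
      intro x hx
      show 1 - g (1 - (1 - f (1 - x))) = 1 - f (1 - (1 - g (1 - x)))
      rw [sub_sub_cancel, sub_sub_cancel, hcomm _ (hmem1 x hx)]
    obtain ⟨K0, K1, K2⟩ := key f2 g2 hfd2 hgd2 hf20 hf21 hg20 hg21 hposf2 hposg2
      hcontg2 hD02 hD12 hlt2 hcomm2
    rw [hrg 0] at K0
    rw [hrg 1] at K1
    norm_num at K0 K1
    refine ⟨K1, K0, ?_⟩
    intro a ha hga
    have h1a : (1 - a) ∈ Ioo (0:ℝ) 1 := ⟨by linarith [ha.2], by linarith [ha.1]⟩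
    have hfix2 : g2 (1 - a) = 1 - a := by
      show 1 - g (1 - (1 - a)) = 1 - a
      rw [sub_sub_cancel, hga]
    have := K2 (1 - a) h1a hfix2
    rw [hrg (1 - a), sub_sub_cancel] at this
    exact this
end
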